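/- arXiv:2003.01530 — 10 statements merged into one kernel-verified Lean document; each statement's English description precedes it below -/
import Mathlib

section
/- Let ⪯ be an admissible order on F(ℝ), i.e. a linear (total) order on the set of fuzzy numbers such that A ≤_KY B implies A ⪯ B. Then F(ℝ) has no greatest element and no smallest element with respect to ⪯. -/
open Set

/-- A fuzzy number: a map `ℝ → [0,1]` that is normal, whose α-cuts for
`α ∈ (0,1]` are nonempty closed bounded intervals, and whose support is bounded. -/
def IsFuzzyNumber (A : ℝ → ℝ) : Prop :=
  (∀ x, A x ∈ Set.Icc (0:ℝ) 1) ∧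
  sSup (Set.range A) = 1 ∧
  (∀ α ∈ Set.Ioc (0:ℝ) 1, ∃ a b : ℝ, a ≤ b ∧ {x | α ≤ A x} = Set.Icc a b) ∧
  Bornology.IsBounded {x | 0 < A x}

/-- The set `F(ℝ)` of fuzzy numbers. -/
def FN : Type := {f : ℝ → ℝ // IsFuzzyNumber f}

/-- The α-cut of a fuzzy number. -/
def cut (A : FN) (α : ℝ) : Set ℝ := {x | α ≤ A.1 x}

/-- Left endpoint `l*_A(α)` of the α-cut. -/
noncomputable def lstar (A : FN) (α : ℝ) : ℝ := sInf (cut A α)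

/-- Right endpoint `r*_A(α)` of the α-cut. -/
noncomputable def rstar (A : FN) (α : ℝ) : ℝ := sSup (cut A α)

/-- The Klir–Yuan order: `A ≤_KY B` iff `A_α ≤_KM B_α` for every `α ∈ (0,1]`. -/
def leKY (A B : FN) : Prop :=
  ∀ α ∈ Set.Ioc (0:ℝ) 1, lstar A α ≤ lstar B α ∧ rstar A α ≤ rstar B α

/-- `S ⊆ (0,1]` is upper dense in `(0,1]`. -/
def UpperDense (S : Set ℝ) : Prop :=
  S ⊆ Set.Ioc (0:ℝ) 1 ∧
  ∀ x ∈ Set.Ioc (0:ℝ) 1, ∀ ε > (0:ℝ), ∃ δ ∈ S, x ≤ δ ∧ δ < x + ε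

/-- Shift of a fuzzy number by `t`. -/
noncomputable def shiftFN (A : FN) (t : ℝ) : FN := by
  refine ⟨fun x => A.1 (x - t), ?_, ?_, ?_, ?_⟩
  · intro x; exact A.2.1 _
  · have : Set.range (fun x => A.1 (x - t)) = Set.range A.1 := by
      ext y; constructor
      · rintro ⟨x, rfl⟩; exact ⟨x - t, rfl⟩
      · rintro ⟨x, rfl⟩; exact ⟨x + t, by simp⟩
    rw [this]; exact A.2.2.1
  · intro α hα
    obtain ⟨a, b, hab, hIcc⟩ := A.2.2.2.1 α hα
    refine ⟨a + t, b + t, by linarith, ?_⟩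
    ext x
    have : (α ≤ A.1 (x - t)) ↔ x - t ∈ Set.Icc a b := by
      constructor
      · intro h; rw [← hIcc]; exact h
      · intro h; have : x - t ∈ {x | α ≤ A.1 x} := hIcc ▸ h; exact this
    simp only [Set.mem_setOf_eq, Set.mem_Icc] at *
    rw [this]; constructor <;> (intro ⟨h1, h2⟩; constructor <;> linarith)
  · have : {x | 0 < A.1 (x - t)} = (fun x => x + t) '' {x | 0 < A.1 x} := by
      ext x; simp only [Set.mem_setOf_eq, Set.mem_image]
      constructor
      · intro h; exact ⟨x - t, h, by ring⟩
      · rintro ⟨y, hy, rfl⟩; simpa using hy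
    rw [this]
    have hiso : Isometry (fun x : ℝ => x + t) := fun x y => by
      simp [edist_dist, Real.dist_eq]
    exact (hiso.lipschitz.isBounded_image A.2.2.2.2)

lemma cut_shiftFN (A : FN) (t α : ℝ) :
    cut (shiftFN A t) α = (fun x => x + t) '' cut A α := by
  ext x
  simp only [cut, shiftFN, Set.mem_setOf_eq, Set.mem_image]
  constructor
  · intro h; exact ⟨x - t, h, by ring⟩
  · rintro ⟨y, hy, rfl⟩; simpa using hy

lemma endpoints (A : FN) {α : ℝ} (hα : α ∈ Set.Ioc (0:ℝ) 1) :
    ∃ a b : ℝ, a ≤ b ∧ cut A α = Set.Icc a b ∧ lstar A α = a ∧ rstar A α = b := by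
  obtain ⟨a, b, hab, hIcc⟩ := A.2.2.2.1 α hα
  exact ⟨a, b, hab, hIcc, by rw [lstar, cut, hIcc, csInf_Icc hab],
    by rw [rstar, cut, hIcc, csSup_Icc hab]⟩

lemma leKY_shift_of_nonneg (A : FN) {t : ℝ} (ht : 0 ≤ t) : leKY A (shiftFN A t) := by
  intro α hα
  obtain ⟨a, b, hab, hIcc, hl, hr⟩ := endpoints A hα
  have hcut : cut (shiftFN A t) α = Set.Icc (a + t) (b + t) := by
    rw [cut_shiftFN, hIcc]
    ext x; simp only [Set.mem_image, Set.mem_Icc]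
    constructor
    · rintro ⟨y, ⟨h1, h2⟩, rfl⟩; constructor <;> linarith
    · rintro ⟨h1, h2⟩; exact ⟨x - t, ⟨by linarith, by linarith⟩, by ring⟩
  have hl' : lstar (shiftFN A t) α = a + t := by
    rw [lstar, hcut, csInf_Icc (by linarith)]
  have hr' : rstar (shiftFN A t) α = b + t := by
    rw [rstar, hcut, csSup_Icc (by linarith)]
  rw [hl, hr, hl', hr']
  constructor <;> linarith

lemma shiftFN_ne (A : FN) {t : ℝ} (ht : t ≠ 0) : shiftFN A t ≠ A := by
  intro heq
  have hα : (1:ℝ) ∈ Set.Ioc (0:ℝ) 1 := ⟨one_pos, le_refl _⟩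
  obtain ⟨a, b, hab, hIcc, _, _⟩ := endpoints A hα
  have hcut : cut (shiftFN A t) 1 = Set.Icc (a + t) (b + t) := by
    rw [cut_shiftFN, hIcc]
    ext x; simp only [Set.mem_image, Set.mem_Icc]
    constructor
    · rintro ⟨y, ⟨h1, h2⟩, rfl⟩; constructor <;> linarith
    · rintro ⟨h1, h2⟩; exact ⟨x - t, ⟨by linarith, by linarith⟩, by ring⟩
  rw [heq, hIcc] at hcut
  have ha : a ∈ Set.Icc (a + t) (b + t) := hcut ▸ Set.mem_Icc.2 ⟨le_refl a, hab⟩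
  have hb : b ∈ Set.Icc (a + t) (b + t) := hcut ▸ Set.mem_Icc.2 ⟨hab, le_refl b⟩
  have h1 := (Set.mem_Icc.1 ha).1
  have h2 := (Set.mem_Icc.1 hb).2
  exact ht (by linarith)

/-- If `⪯` is an admissible order on `F(ℝ)` (a linear order refining
the Klir–Yuan order), then `F(ℝ)` has no greatest and no smallest element for `⪯`. -/
theorem no_greatest_no_smallest
    (pre : FN → FN → Prop)
    (hrefl : ∀ A, pre A A)
    (hanti : ∀ A B, pre A B → pre B A → A = B)
    (htrans : ∀ A B C, pre A B → pre B C → pre A C)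
    (htotal : ∀ A B, pre A B ∨ pre B A)
    (hrefines : ∀ A B, leKY A B → pre A B) :
    (¬ ∃ G : FN, ∀ A : FN, pre A G) ∧ (¬ ∃ L : FN, ∀ A : FN, pre L A) := by
  constructor
  · rintro ⟨G, hG⟩
    have h1 : pre G (shiftFN G 1) := hrefines _ _ (leKY_shift_of_nonneg G zero_le_one)
    have h2 : pre (shiftFN G 1) G := hG _
    exact shiftFN_ne G one_ne_zero (hanti _ _ h2 h1)
  · rintro ⟨L, hL⟩
    have h1 : pre (shiftFN L (-1)) L := by
      have := leKY_shift_of_nonneg (shiftFN L (-1)) zero_le_one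
      have hEq : shiftFN (shiftFN L (-1)) 1 = L := by
        apply Subtype.ext
        funext x
        show L.1 (x - 1 - (-1)) = L.1 x
        norm_num
      rw [hEq] at this
      exact hrefines _ _ this
    have h2 : pre L (shiftFN L (-1)) := hL _
    exact shiftFN_ne L (by norm_num) (hanti _ _ h1 h2)
end

section
/- Let A and B be fuzzy numbers and let S ⊆ (0,1] be upper dense in (0,1]. Then A = B if and only if A_α = B_α for every α ∈ S. -/
open Set

lemma aux_le (S : Set ℝ) (hS : UpperDense S) (A B : FN)
    (h : ∀ α ∈ S, cut A α = cut B α) (x : ℝ) : A.1 x ≤ B.1 x := by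
  by_contra hlt
  push_neg at hlt
  have hA := A.2.1 x
  have hB := B.2.1 x
  have ht : (B.1 x + A.1 x)/2 ∈ Set.Ioc (0:ℝ) 1 :=
    ⟨by have := hB.1; linarith, by have := hA.2; have := hB.2; linarith⟩
  obtain ⟨δ, hδS, h1, h2⟩ := hS.2 _ ht ((A.1 x - B.1 x)/2) (by linarith)
  have hxA : x ∈ cut A δ := by
    show δ ≤ A.1 x
    linarith
  rw [h δ hδS] at hxA
  have : δ ≤ B.1 x := hxA
  linarith

/-- For fuzzy numbers `A, B` and an upper dense set `S ⊆ (0,1]`: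
`A = B` iff `A_α = B_α` for every `α ∈ S`. -/
theorem eq_iff_cuts_eq_on_upper_dense
    (S : Set ℝ) (hS : UpperDense S) (A B : FN) :
    A = B ↔ ∀ α ∈ S, cut A α = cut B α := by
  constructor
  · rintro rfl _ _; rfl
  · intro h
    apply Subtype.ext
    funext x
    exact le_antisymm (aux_le S hS A B h x)
      (aux_le S hS B A (fun α hα => (h α hα).symm) x)
end

section
/- Let S = (α_i)_{i∈ℤ⁺} be a sequence in (0,1] whose set of values is upper dense in (0,1]. Then the Wang–Wang relation ≤_WW^S is a linear (total) order on F(ℝ): it is reflexive, antisymmetric, transitive, and any two fuzzy numbers are comparable. -/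
open Set

/-- The Wang–Wang coefficients `c_i` associated to the sequence `a` (indices `i ≥ 1`):
`c_i(A) = r*(α_{i/2}) − l*(α_{i/2})` for even `i`, and
`c_i(A) = l*(α_{(i+1)/2}) + r*(α_{(i+1)/2})` for odd `i`. -/
noncomputable def cWW (a : ℕ → ℝ) (i : ℕ) (A : FN) : ℝ :=
  if i % 2 = 0 then rstar A (a (i / 2)) - lstar A (a (i / 2))
  else lstar A (a ((i + 1) / 2)) + rstar A (a ((i + 1) / 2))

/-- The strict Wang–Wang relation `A <_WW^S B`. -/
noncomputable def ltWW (a : ℕ → ℝ) (A B : FN) : Prop :=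
  ∃ n₀, 1 ≤ n₀ ∧ cWW a n₀ A < cWW a n₀ B ∧
    ∀ i, 1 ≤ i → i < n₀ → cWW a i A = cWW a i B

/-- The Wang–Wang relation `A ≤_WW^S B`. -/
noncomputable def leWW (a : ℕ → ℝ) (A B : FN) : Prop :=
  ltWW a A B ∨ A = B

lemma cut_eq_Icc (A : FN) {α : ℝ} (hα : α ∈ Set.Ioc (0:ℝ) 1) :
    cut A α = Set.Icc (lstar A α) (rstar A α) := by
  obtain ⟨u, v, huv, h⟩ := A.2.2.2.1 α hα
  have hc : cut A α = Set.Icc u v := h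
  rw [lstar, rstar, hc, csInf_Icc huv, csSup_Icc huv]

lemma pointwise_le (a : ℕ → ℝ)
    (hdense : UpperDense {t | ∃ i, 1 ≤ i ∧ a i = t}) (A B : FN)
    (hcut : ∀ j, 1 ≤ j → cut A (a j) = cut B (a j)) (x : ℝ) : A.1 x ≤ B.1 x := by
  by_contra h
  push_neg at h
  have hB0 : 0 ≤ B.1 x := (B.2.1 x).1
  have hA1 : A.1 x ≤ 1 := (A.2.1 x).2
  set γ := (B.1 x + A.1 x)/2 with hγ
  obtain ⟨δ, hδS, hγδ, hδlt⟩ := hdense.2 γ ⟨by simp only [hγ]; linarith, by simp only [hγ]; linarith⟩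
    (A.1 x - γ) (by simp only [hγ]; linarith)
  obtain ⟨j, hj, rfl⟩ := hδS
  have haj : a j < A.1 x := by linarith
  have hx : x ∈ cut A (a j) := le_of_lt haj
  rw [hcut j hj] at hx
  have hab : a j ≤ B.1 x := hx
  have hbγ : B.1 x < γ := by simp only [hγ]; linarith
  linarith

lemma eq_of_cWW_eq (a : ℕ → ℝ)
    (ha : ∀ i, 1 ≤ i → a i ∈ Set.Ioc (0:ℝ) 1)
    (hdense : UpperDense {t | ∃ i, 1 ≤ i ∧ a i = t}) (A B : FN)
    (h : ∀ i, 1 ≤ i → cWW a i A = cWW a i B) : A = B := by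
  have key : ∀ j, 1 ≤ j → lstar A (a j) = lstar B (a j) ∧ rstar A (a j) = rstar B (a j) := by
    intro j hj
    have he := h (2*j) (by omega)
    have ho := h (2*j-1) (by omega)
    have e1 : (2*j) % 2 = 0 := by omega
    have e2 : (2*j)/2 = j := by omega
    have e3 : (2*j-1) % 2 = 1 := by omega
    have e4 : (2*j-1+1)/2 = j := by omega
    simp only [cWW, e1, e2, e3, e4, reduceIte, one_ne_zero] at he ho
    constructor <;> linarith
  have hcut : ∀ j, 1 ≤ j → cut A (a j) = cut B (a j) := by
    intro j hj
    rw [cut_eq_Icc A (ha j hj), cut_eq_Icc B (ha j hj), (key j hj).1, (key j hj).2]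
  apply Subtype.ext; funext x
  exact le_antisymm (pointwise_le a hdense A B hcut x)
    (pointwise_le a hdense B A (fun j hj => (hcut j hj).symm) x)

/-- For any sequence `(α_i)_{i ≥ 1}` in `(0,1]` whose set of values is
upper dense in `(0,1]`, the Wang–Wang relation `≤_WW^S` is a linear (total) order on
`F(ℝ)`: reflexive, antisymmetric, transitive, and total. -/
theorem wangWang_linear_order
    (a : ℕ → ℝ)
    (ha : ∀ i, 1 ≤ i → a i ∈ Set.Ioc (0:ℝ) 1)
    (hdense : UpperDense {t | ∃ i, 1 ≤ i ∧ a i = t}) :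
    (∀ A, leWW a A A) ∧
    (∀ A B, leWW a A B → leWW a B A → A = B) ∧
    (∀ A B C, leWW a A B → leWW a B C → leWW a A C) ∧
    (∀ A B, leWW a A B ∨ leWW a B A) := by
  refine ⟨fun A => Or.inr rfl, ?_, ?_, ?_⟩
  · rintro A B (⟨n,hn1,hn2,hn3⟩|rfl) hBA
    · rcases hBA with ⟨m,hm1,hm2,hm3⟩|rfl
      · rcases lt_trichotomy n m with hlt|rfl|hgt
        · exact absurd (hm3 n hn1 hlt) (by linarith)
        · linarith
        · exact absurd (hn3 m hm1 hgt) (by linarith)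
      · linarith
    · rfl
  · rintro A B C (⟨n,hn1,hn2,hn3⟩|rfl) hBC
    · rcases hBC with ⟨m,hm1,hm2,hm3⟩|rfl
      · left
        rcases lt_trichotomy n m with hlt|rfl|hgt
        · exact ⟨n, hn1, by rw [← hm3 n hn1 hlt]; exact hn2,
            fun i hi1 hi2 => (hn3 i hi1 hi2).trans (hm3 i hi1 (hi2.trans hlt))⟩
        · exact ⟨n, hn1, hn2.trans hm2,
            fun i hi1 hi2 => (hn3 i hi1 hi2).trans (hm3 i hi1 hi2)⟩
        · exact ⟨m, hm1, by rw [hn3 m hm1 hgt]; exact hm2,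
            fun i hi1 hi2 => (hn3 i hi1 (hi2.trans hgt)).trans (hm3 i hi1 hi2)⟩
      · exact Or.inl ⟨n,hn1,hn2,hn3⟩
    · exact hBC
  · intro A B
    by_cases hAB : A = B
    · exact Or.inl (Or.inr hAB)
    have hex : ∃ i, 1 ≤ i ∧ cWW a i A ≠ cWW a i B := by
      by_contra hc
      push_neg at hc
      exact hAB (eq_of_cWW_eq a ha hdense A B hc)
    classical
    let n := Nat.find hex
    obtain ⟨hn1, hn2⟩ := Nat.find_spec hex
    have hmin : ∀ i, 1 ≤ i → i < n → cWW a i A = cWW a i B := by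
      intro i hi1 hi2
      by_contra hc
      exact absurd ⟨hi1, hc⟩ (Nat.find_min hex hi2)
    rcases lt_or_gt_of_ne hn2 with hlt|hgt
    · exact Or.inl (Or.inl ⟨n, hn1, hlt, hmin⟩)
    · exact Or.inr (Or.inl ⟨n, hn1, hgt, fun i h1 h2 => (hmin i h1 h2).symm⟩)
end

section
/- For fuzzy numbers A and B, the following assertions are equivalent: (1) A ∧ B = A; (2) A ∨ B = B; (3) A_α ≤_KM B_α for each α ∈ (0,1]. -/
open Set

/-- The fuzzy minimum: `(A ∧ B)(x) = sup {min(A(y),B(z)) : min(y,z) = x}`. -/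
noncomputable def fmin (f g : ℝ → ℝ) : ℝ → ℝ := fun x =>
  sSup {m | ∃ y z : ℝ, min y z = x ∧ m = min (f y) (g z)}

/-- The fuzzy maximum: `(A ∨ B)(x) = sup {min(A(y),B(z)) : max(y,z) = x}`. -/
noncomputable def fmax (f g : ℝ → ℝ) : ℝ → ℝ := fun x =>
  sSup {m | ∃ y z : ℝ, max y z = x ∧ m = min (f y) (g z)}

lemma FN.nonneg (A : FN) (x : ℝ) : 0 ≤ A.1 x := (A.2.1 x).1

lemma FN.le_one (A : FN) (x : ℝ) : A.1 x ≤ 1 := (A.2.1 x).2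

lemma cut_eq (A : FN) {α : ℝ} (hα : α ∈ Set.Ioc (0:ℝ) 1) :
    lstar A α ≤ rstar A α ∧ cut A α = Set.Icc (lstar A α) (rstar A α) := by
  obtain ⟨a, b, hab, h⟩ := A.2.2.2.1 α hα
  have hc : cut A α = Set.Icc a b := h
  have hl : lstar A α = a := by unfold lstar; rw [hc, csInf_Icc hab]
  have hr : rstar A α = b := by unfold rstar; rw [hc, csSup_Icc hab]
  rw [hl, hr]; exact ⟨hab, hc⟩

lemma mem_cut_iff (A : FN) {α : ℝ} (hα : α ∈ Set.Ioc (0:ℝ) 1) (x : ℝ) :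
    α ≤ A.1 x ↔ lstar A α ≤ x ∧ x ≤ rstar A α := by
  have h := Set.ext_iff.1 (cut_eq A hα).2 x
  simpa [cut] using h

lemma val_lstar (A : FN) {α : ℝ} (hα : α ∈ Set.Ioc (0:ℝ) 1) : α ≤ A.1 (lstar A α) :=
  (mem_cut_iff A hα _).2 ⟨le_rfl, (cut_eq A hα).1⟩

lemma val_rstar (A : FN) {α : ℝ} (hα : α ∈ Set.Ioc (0:ℝ) 1) : α ≤ A.1 (rstar A α) :=
  (mem_cut_iff A hα _).2 ⟨(cut_eq A hα).1, le_rfl⟩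

lemma lstar_mono (A : FN) {β α : ℝ} (hβ : 0 < β) (hβα : β ≤ α) (hα : α ≤ 1) :
    lstar A β ≤ lstar A α := by
  have hαm : α ∈ Set.Ioc (0:ℝ) 1 := ⟨lt_of_lt_of_le hβ hβα, hα⟩
  have hβm : β ∈ Set.Ioc (0:ℝ) 1 := ⟨hβ, hβα.trans hα⟩
  exact ((mem_cut_iff A hβm _).1 (hβα.trans (val_lstar A hαm))).1

lemma rstar_anti (A : FN) {β α : ℝ} (hβ : 0 < β) (hβα : β ≤ α) (hα : α ≤ 1) :
    rstar A α ≤ rstar A β := by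
  have hαm : α ∈ Set.Ioc (0:ℝ) 1 := ⟨lt_of_lt_of_le hβ hβα, hα⟩
  have hβm : β ∈ Set.Ioc (0:ℝ) 1 := ⟨hβ, hβα.trans hα⟩
  exact ((mem_cut_iff A hβm _).1 (hβα.trans (val_rstar A hαm))).2

lemma rstar_approx (B : FN) {α x : ℝ} (hα : α ∈ Set.Ioc (0:ℝ) 1) (hx : rstar B α < x) :
    ∃ β, 0 < β ∧ β < α ∧ rstar B β < x := by
  set T := rstar B '' Set.Ioo 0 α with hT
  have hne : T.Nonempty := ⟨_, ⟨α/2, ⟨half_pos hα.1, half_lt_self hα.1⟩, rfl⟩⟩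
  have hbdd : BddBelow T := by
    refine ⟨rstar B α, ?_⟩
    rintro _ ⟨β, hβ, rfl⟩
    exact rstar_anti B hβ.1 hβ.2.le hα.2
  set s := sInf T with hs
  have hscut : ∀ β ∈ Set.Ioo (0:ℝ) α, β ≤ B.1 s := by
    intro β hβ
    have hβm : β ∈ Set.Ioc (0:ℝ) 1 := ⟨hβ.1, hβ.2.le.trans hα.2⟩
    refine (mem_cut_iff B hβm s).2 ⟨?_, ?_⟩
    · apply le_csInf hne
      rintro _ ⟨β', hβ', rfl⟩
      have hβ'm : β' ∈ Set.Ioc (0:ℝ) 1 := ⟨hβ'.1, hβ'.2.le.trans hα.2⟩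
      rcases le_total β β' with h | h
      · exact (lstar_mono B hβ.1 h hβ'm.2).trans (cut_eq B hβ'm).1
      · exact (cut_eq B hβm).1.trans (rstar_anti B hβ'.1 h hβm.2)
    · exact csInf_le hbdd ⟨β, hβ, rfl⟩
  have hsα : α ≤ B.1 s := by
    refine le_of_forall_lt fun c hc => ?_
    obtain ⟨β, hβ1, hβ2⟩ := exists_between (show max c 0 < α from max_lt hc hα.1)
    have hβIoo : β ∈ Set.Ioo (0:ℝ) α := ⟨lt_of_le_of_lt (le_max_right c 0) hβ1, hβ2⟩
    exact lt_of_lt_of_le (lt_of_le_of_lt (le_max_left c 0) hβ1) (hscut β hβIoo)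
  have hslt : s < x := lt_of_le_of_lt ((mem_cut_iff B hα s).1 hsα).2 hx
  obtain ⟨_, ⟨β, hβ, rfl⟩, hlt⟩ := (csInf_lt_iff hbdd hne).1 hslt
  exact ⟨β, hβ.1, hβ.2, hlt⟩

lemma lstar_approx (A : FN) {α x : ℝ} (hα : α ∈ Set.Ioc (0:ℝ) 1) (hx : x < lstar A α) :
    ∃ β, 0 < β ∧ β < α ∧ x < lstar A β := by
  set T := lstar A '' Set.Ioo 0 α with hT
  have hne : T.Nonempty := ⟨_, ⟨α/2, ⟨half_pos hα.1, half_lt_self hα.1⟩, rfl⟩⟩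
  have hbdd : BddAbove T := by
    refine ⟨lstar A α, ?_⟩
    rintro _ ⟨β, hβ, rfl⟩
    exact lstar_mono A hβ.1 hβ.2.le hα.2
  set s := sSup T with hs
  have hscut : ∀ β ∈ Set.Ioo (0:ℝ) α, β ≤ A.1 s := by
    intro β hβ
    have hβm : β ∈ Set.Ioc (0:ℝ) 1 := ⟨hβ.1, hβ.2.le.trans hα.2⟩
    refine (mem_cut_iff A hβm s).2 ⟨?_, ?_⟩
    · exact le_csSup hbdd ⟨β, hβ, rfl⟩
    · apply csSup_le hne
      rintro _ ⟨β', hβ', rfl⟩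
      have hβ'm : β' ∈ Set.Ioc (0:ℝ) 1 := ⟨hβ'.1, hβ'.2.le.trans hα.2⟩
      rcases le_total β β' with h | h
      · exact ((cut_eq A hβ'm).1.trans (rstar_anti A hβ.1 h hβ'm.2))
      · exact (lstar_mono A hβ'.1 h hβm.2).trans (cut_eq A hβm).1
  have hsα : α ≤ A.1 s := by
    refine le_of_forall_lt fun c hc => ?_
    obtain ⟨β, hβ1, hβ2⟩ := exists_between (show max c 0 < α from max_lt hc hα.1)
    have hβIoo : β ∈ Set.Ioo (0:ℝ) α := ⟨lt_of_le_of_lt (le_max_right c 0) hβ1, hβ2⟩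
    exact lt_of_lt_of_le (lt_of_le_of_lt (le_max_left c 0) hβ1) (hscut β hβIoo)
  have hslt : x < s := lt_of_lt_of_le hx ((mem_cut_iff A hα s).1 hsα).1
  obtain ⟨_, ⟨β, hβ, rfl⟩, hlt⟩ := (lt_csSup_iff hbdd hne).1 hslt
  exact ⟨β, hβ.1, hβ.2, hlt⟩

lemma fmin_set_ne (A B : FN) (x : ℝ) :
    Set.Nonempty {m | ∃ y z : ℝ, min y z = x ∧ m = min (A.1 y) (B.1 z)} :=
  ⟨_, x, x, min_self x, rfl⟩

lemma fmin_set_bdd (A B : FN) (x : ℝ) :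
    BddAbove {m | ∃ y z : ℝ, min y z = x ∧ m = min (A.1 y) (B.1 z)} := by
  refine ⟨1, ?_⟩
  rintro _ ⟨y, z, _, rfl⟩
  exact (min_le_left _ _).trans (A.le_one y)

lemma fmax_set_ne (A B : FN) (x : ℝ) :
    Set.Nonempty {m | ∃ y z : ℝ, max y z = x ∧ m = min (A.1 y) (B.1 z)} :=
  ⟨_, x, x, max_self x, rfl⟩

lemma fmax_set_bdd (A B : FN) (x : ℝ) :
    BddAbove {m | ∃ y z : ℝ, max y z = x ∧ m = min (A.1 y) (B.1 z)} := by
  refine ⟨1, ?_⟩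
  rintro _ ⟨y, z, _, rfl⟩
  exact (min_le_left _ _).trans (A.le_one y)

lemma fmin_eq_iff (A B : FN) : fmin A.1 B.1 = A.1 ↔ leKY A B := by
  constructor
  · intro h α hα
    constructor
    · by_contra hc
      push_neg at hc
      have key : α ≤ fmin A.1 B.1 (lstar B α) := by
        refine le_trans (le_min (val_lstar A hα) (val_lstar B hα))
          (le_csSup (fmin_set_bdd A B _) ⟨lstar A α, lstar B α, min_eq_right hc.le, rfl⟩)
      rw [h] at key
      exact absurd ((mem_cut_iff A hα _).1 key).1 (not_le.2 hc)
    · by_contra hc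
      push_neg at hc
      obtain ⟨β, hβ0, hβα, hβ⟩ := rstar_approx B hα hc
      have hβm : β ∈ Set.Ioc (0:ℝ) 1 := ⟨hβ0, hβα.le.trans hα.2⟩
      have key : A.1 (rstar A α) ≤ β := by
        rw [← h]
        refine csSup_le (fmin_set_ne A B _) ?_
        rintro m ⟨y, z, hyz, rfl⟩
        have hzx : rstar A α ≤ z := hyz ▸ min_le_right y z
        have hBz : B.1 z ≤ β := by
          by_contra hb
          push_neg at hb
          have := ((mem_cut_iff B hβm z).1 hb.le).2
          linarith
        exact (min_le_right _ _).trans hBz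
      have := val_rstar A hα
      linarith
  · intro hKY
    funext x
    apply le_antisymm
    · refine csSup_le (fmin_set_ne A B _) ?_
      rintro m ⟨y, z, hyz, rfl⟩
      rcases le_total y z with hle | hle
      · rw [min_eq_left hle] at hyz
        subst hyz
        exact min_le_left _ _
      · rw [min_eq_right hle] at hyz
        subst hyz
        by_contra hm
        push_neg at hm
        set α := min (A.1 y) (B.1 z) with hαdef
        have hαm : α ∈ Set.Ioc (0:ℝ) 1 :=
          ⟨lt_of_le_of_lt (A.nonneg z) hm, (min_le_left _ _).trans (A.le_one y)⟩
        have hx1 : lstar A α ≤ z :=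
          le_trans (hKY α hαm).1 ((mem_cut_iff B hαm z).1 (min_le_right _ _)).1
        have hx2 : z ≤ rstar A α :=
          le_trans hle ((mem_cut_iff A hαm y).1 (min_le_left _ _)).2
        exact absurd ((mem_cut_iff A hαm z).2 ⟨hx1, hx2⟩) (not_le.2 hm)
    · rcases eq_or_lt_of_le (A.nonneg x) with h0 | h0
      · have hAB : A.1 x ≤ B.1 x := by rw [← h0]; exact B.nonneg x
        exact le_trans (le_min le_rfl hAB)
          (le_csSup (fmin_set_bdd A B x) ⟨x, x, min_self x, rfl⟩)
      · have hαm : A.1 x ∈ Set.Ioc (0:ℝ) 1 := ⟨h0, A.le_one x⟩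
        have hxz : min x (rstar B (A.1 x)) = x :=
          min_eq_left (le_trans ((mem_cut_iff A hαm x).1 le_rfl).2 (hKY _ hαm).2)
        exact le_trans (le_min le_rfl (val_rstar B hαm))
          (le_csSup (fmin_set_bdd A B x) ⟨x, rstar B (A.1 x), hxz, rfl⟩)

lemma fmax_eq_iff (A B : FN) : fmax A.1 B.1 = B.1 ↔ leKY A B := by
  constructor
  · intro h α hα
    constructor
    · by_contra hc
      push_neg at hc
      obtain ⟨β, hβ0, hβα, hβ⟩ := lstar_approx A hα hc
      have hβm : β ∈ Set.Ioc (0:ℝ) 1 := ⟨hβ0, hβα.le.trans hα.2⟩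
      have key : B.1 (lstar B α) ≤ β := by
        rw [← h]
        refine csSup_le (fmax_set_ne A B _) ?_
        rintro m ⟨y, z, hyz, rfl⟩
        have hyx : y ≤ lstar B α := hyz ▸ le_max_left y z
        have hAy : A.1 y ≤ β := by
          by_contra hb
          push_neg at hb
          have := ((mem_cut_iff A hβm y).1 hb.le).1
          linarith
        exact (min_le_left _ _).trans hAy
      have := val_lstar B hα
      linarith
    · by_contra hc
      push_neg at hc
      have key : α ≤ fmax A.1 B.1 (rstar A α) := by
        refine le_trans (le_min (val_rstar A hα) (val_rstar B hα))
          (le_csSup (fmax_set_bdd A B _) ⟨rstar A α, rstar B α, max_eq_left hc.le, rfl⟩)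
      rw [h] at key
      exact absurd ((mem_cut_iff B hα _).1 key).2 (not_le.2 hc)
  · intro hKY
    funext x
    apply le_antisymm
    · refine csSup_le (fmax_set_ne A B _) ?_
      rintro m ⟨y, z, hyz, rfl⟩
      rcases le_total y z with hle | hle
      · rw [max_eq_right hle] at hyz
        subst hyz
        exact min_le_right _ _
      · rw [max_eq_left hle] at hyz
        subst hyz
        by_contra hm
        push_neg at hm
        set α := min (A.1 y) (B.1 z) with hαdef
        have hαm : α ∈ Set.Ioc (0:ℝ) 1 :=
          ⟨lt_of_le_of_lt (B.nonneg y) hm, (min_le_left _ _).trans (A.le_one y)⟩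
        have hx1 : lstar B α ≤ y :=
          le_trans ((mem_cut_iff B hαm z).1 (min_le_right _ _)).1 hle
        have hx2 : y ≤ rstar B α :=
          le_trans ((mem_cut_iff A hαm y).1 (min_le_left _ _)).2 (hKY α hαm).2
        exact absurd ((mem_cut_iff B hαm y).2 ⟨hx1, hx2⟩) (not_le.2 hm)
    · rcases eq_or_lt_of_le (B.nonneg x) with h0 | h0
      · have hBA : B.1 x ≤ A.1 x := by rw [← h0]; exact A.nonneg x
        exact le_trans (le_min hBA le_rfl)
          (le_csSup (fmax_set_bdd A B x) ⟨x, x, max_self x, rfl⟩)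
      · have hαm : B.1 x ∈ Set.Ioc (0:ℝ) 1 := ⟨h0, B.le_one x⟩
        have hxz : max (lstar A (B.1 x)) x = x :=
          max_eq_right (le_trans (hKY _ hαm).1 ((mem_cut_iff B hαm x).1 le_rfl).1)
        exact le_trans (le_min (val_lstar A hαm) le_rfl)
          (le_csSup (fmax_set_bdd A B x) ⟨lstar A (B.1 x), x, hxz, rfl⟩)

/-- For fuzzy numbers `A, B` the following are equivalent:
(1) `A ∧ B = A`; (2) `A ∨ B = B`; (3) `A_α ≤_KM B_α` for each `α ∈ (0,1]`. -/
theorem klirYuan_characterization (A B : FN) :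
    (fmin A.1 B.1 = A.1 ↔ leKY A B) ∧ (fmax A.1 B.1 = B.1 ↔ leKY A B) := by
  exact ⟨fmin_eq_iff A B, fmax_eq_iff A B⟩
end

section
/- For fuzzy numbers A and B, the fuzzy sets A ∧ B and A ∨ B are fuzzy numbers; moreover, (F(ℝ), ∧, ∨) is a distributive lattice (i.e. ∧ and ∨ are commutative, associative, idempotent, satisfy the absorption laws, and each distributes over the other). -/
open Set

section Aux

/-- Bundled pointwise facts about a fuzzy number with a chosen core point. -/
structure Nice (f : ℝ → ℝ) (c : ℝ) : Prop where
  mem : ∀ x, f x ∈ Set.Icc (0:ℝ) 1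
  core : f c = 1
  qc : ∀ ⦃u x y : ℝ⦄, u ≤ x → x ≤ y → min (f u) (f y) ≤ f x

lemma nice_of_fuzzy {f : ℝ → ℝ} (hf : IsFuzzyNumber f) : ∃ c, Nice f c := by
  obtain ⟨a, b, hab, hcut⟩ := hf.2.2.1 1 ⟨one_pos, le_refl 1⟩
  have ha : a ∈ {x | (1:ℝ) ≤ f x} := by rw [hcut]; exact ⟨le_refl a, hab⟩
  refine ⟨a, hf.1, le_antisymm (hf.1 a).2 ha, ?_⟩
  intro u x y hux hxy
  rcases le_or_gt (min (f u) (f y)) 0 with h | h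
  · exact h.trans (hf.1 x).1
  · have hα1 : min (f u) (f y) ≤ 1 := (min_le_left _ _).trans (hf.1 u).2
    obtain ⟨p, q, hpq, hc⟩ := hf.2.2.1 (min (f u) (f y)) ⟨h, hα1⟩
    have hu : u ∈ {x | min (f u) (f y) ≤ f x} := by
      simp only [Set.mem_setOf_eq]; exact min_le_left _ _
    have hy : y ∈ {x | min (f u) (f y) ≤ f x} := by
      simp only [Set.mem_setOf_eq]; exact min_le_right _ _
    rw [hc] at hu hy
    have hx : x ∈ Set.Icc p q := ⟨hu.1.trans hux, hxy.trans hy.2⟩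
    rw [← hc] at hx
    exact hx

/-- One-sided sups. -/
noncomputable def Rsup (f : ℝ → ℝ) (x : ℝ) : ℝ := sSup (f '' Set.Ici x)
noncomputable def Lsup (f : ℝ → ℝ) (x : ℝ) : ℝ := sSup (f '' Set.Iic x)

variable {f g : ℝ → ℝ} {c d x α : ℝ}

lemma bddR (h1 : ∀ x, f x ≤ 1) : BddAbove (f '' Set.Ici x) :=
  ⟨1, by rintro _ ⟨y, _, rfl⟩; exact h1 y⟩

lemma bddL (h1 : ∀ x, f x ≤ 1) : BddAbove (f '' Set.Iic x) :=
  ⟨1, by rintro _ ⟨y, _, rfl⟩; exact h1 y⟩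

lemma le_Rsup (h1 : ∀ x, f x ≤ 1) : f x ≤ Rsup f x :=
  le_csSup (bddR h1) ⟨x, self_mem_Ici, rfl⟩

lemma le_Lsup (h1 : ∀ x, f x ≤ 1) : f x ≤ Lsup f x :=
  le_csSup (bddL h1) ⟨x, self_mem_Iic, rfl⟩

lemma Rsup_le_one (h1 : ∀ x, f x ≤ 1) : Rsup f x ≤ 1 :=
  csSup_le (nonempty_Ici.image f) (by rintro _ ⟨y, _, rfl⟩; exact h1 y)

lemma Lsup_le_one (h1 : ∀ x, f x ≤ 1) : Lsup f x ≤ 1 :=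
  csSup_le (nonempty_Iic.image f) (by rintro _ ⟨y, _, rfl⟩; exact h1 y)

lemma Rsup_nonneg (hf : Nice f c) : 0 ≤ Rsup f x :=
  le_trans (hf.mem x).1 (le_Rsup fun y => (hf.mem y).2)

lemma Lsup_nonneg (hf : Nice f c) : 0 ≤ Lsup f x :=
  le_trans (hf.mem x).1 (le_Lsup fun y => (hf.mem y).2)

lemma Rsup_eq_one (hf : Nice f c) (hx : x ≤ c) : Rsup f x = 1 := by
  refine le_antisymm (Rsup_le_one fun y => (hf.mem y).2) ?_
  have := le_csSup (bddR (f := f) (x := x) fun y => (hf.mem y).2) ⟨c, hx, rfl⟩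
  rwa [hf.core] at this

lemma Lsup_eq_one (hf : Nice f c) (hx : c ≤ x) : Lsup f x = 1 := by
  refine le_antisymm (Lsup_le_one fun y => (hf.mem y).2) ?_
  have := le_csSup (bddL (f := f) (x := x) fun y => (hf.mem y).2) ⟨c, hx, rfl⟩
  rwa [hf.core] at this

lemma Rsup_eq_self (hf : Nice f c) (hx : c ≤ x) : Rsup f x = f x := by
  refine le_antisymm (csSup_le (nonempty_Ici.image f) ?_) (le_Rsup fun y => (hf.mem y).2)
  rintro _ ⟨y, hy, rfl⟩
  have := hf.qc hx (hy : x ≤ y)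
  rwa [hf.core, min_eq_right (hf.mem y).2] at this

lemma Lsup_eq_self (hf : Nice f c) (hx : x ≤ c) : Lsup f x = f x := by
  refine le_antisymm (csSup_le (nonempty_Iic.image f) ?_) (le_Lsup fun y => (hf.mem y).2)
  rintro _ ⟨y, hy, rfl⟩
  have := hf.qc (hy : y ≤ x) hx
  rwa [hf.core, min_eq_left (hf.mem y).2] at this

/-- sup of `min c` over a set. -/
lemma csSup_min_image (c : ℝ) (T : Set ℝ) (hne : T.Nonempty) (hbdd : BddAbove T) :
    sSup ((fun t => min c t) '' T) = min c (sSup T) := by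
  have hbdd' : BddAbove ((fun t => min c t) '' T) :=
    ⟨c, by rintro _ ⟨t, _, rfl⟩; exact min_le_left _ _⟩
  refine le_antisymm (csSup_le (hne.image _) ?_) ?_
  · rintro _ ⟨t, ht, rfl⟩
    exact min_le_min le_rfl (le_csSup hbdd ht)
  · by_cases h : ∃ t ∈ T, c ≤ t
    · obtain ⟨t, ht, hct⟩ := h
      exact le_trans (min_le_left _ _) (le_csSup hbdd' ⟨t, ht, min_eq_left hct⟩)
    · push_neg at h
      have himg : (fun t => min c t) '' T = T := by
        have h2 : ∀ t ∈ T, min c t = t := fun t ht => min_eq_right (h t ht).le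
        calc (fun t => min c t) '' T = (fun t => t) '' T := Set.image_congr h2
          _ = T := Set.image_id' T
      rw [himg]
      exact min_le_right _ _

lemma csSup_min_image' (c : ℝ) (T : Set ℝ) (hne : T.Nonempty) (hbdd : BddAbove T) :
    sSup ((fun t => min t c) '' T) = min (sSup T) c := by
  have : (fun t => min t c) '' T = (fun t => min c t) '' T :=
    Set.image_congr fun t _ => min_comm t c
  rw [this, csSup_min_image c T hne hbdd, min_comm]

/-- Explicit formula for `fmin`. -/
lemma fmin_eq (hf1 : ∀ x, f x ≤ 1) (hg1 : ∀ x, g x ≤ 1) (x : ℝ) :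
    fmin f g x = max (min (f x) (Rsup g x)) (min (Rsup f x) (g x)) := by
  have hS : {m | ∃ y z : ℝ, min y z = x ∧ m = min (f y) (g z)} =
      ((fun z => min (f x) (g z)) '' Set.Ici x) ∪ ((fun y => min (f y) (g x)) '' Set.Ici x) := by
    ext m
    constructor
    · rintro ⟨y, z, hmin, rfl⟩
      rcases le_total y z with h | h
      · have hy : y = x := by rw [min_eq_left h] at hmin; exact hmin
        exact Or.inl ⟨z, hy ▸ h, by rw [hy]⟩
      · have hz : z = x := by rw [min_eq_right h] at hmin; exact hmin
        exact Or.inr ⟨y, hz ▸ h, by rw [hz]⟩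
    · rintro (⟨z, hz, rfl⟩ | ⟨y, hy, rfl⟩)
      · exact ⟨x, z, min_eq_left hz, rfl⟩
      · exact ⟨y, x, min_eq_right hy, rfl⟩
  have h1 : ((fun z => min (f x) (g z)) '' Set.Ici x) = (fun t => min (f x) t) '' (g '' Set.Ici x) := by
    rw [Set.image_image]
  have h2 : ((fun y => min (f y) (g x)) '' Set.Ici x) = (fun t => min t (g x)) '' (f '' Set.Ici x) := by
    rw [Set.image_image]
  have hb1 : BddAbove ((fun z => min (f x) (g z)) '' Set.Ici x) :=
    ⟨f x, by rintro _ ⟨z, _, rfl⟩; exact min_le_left _ _⟩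
  have hn1 : ((fun z => min (f x) (g z)) '' Set.Ici x).Nonempty :=
    ⟨_, ⟨x, self_mem_Ici, rfl⟩⟩
  have hb2 : BddAbove ((fun y => min (f y) (g x)) '' Set.Ici x) :=
    ⟨g x, by rintro _ ⟨y, _, rfl⟩; exact min_le_right _ _⟩
  have hn2 : ((fun y => min (f y) (g x)) '' Set.Ici x).Nonempty :=
    ⟨_, ⟨x, self_mem_Ici, rfl⟩⟩
  show sSup _ = _
  rw [hS, csSup_union hb1 hn1 hb2 hn2, h1, h2,
    csSup_min_image _ _ (nonempty_Ici.image g) (bddR hg1),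
    csSup_min_image' _ _ (nonempty_Ici.image f) (bddR hf1)]
  rfl

/-- Explicit formula for `fmax`. -/
lemma fmax_eq (hf1 : ∀ x, f x ≤ 1) (hg1 : ∀ x, g x ≤ 1) (x : ℝ) :
    fmax f g x = max (min (f x) (Lsup g x)) (min (Lsup f x) (g x)) := by
  have hS : {m | ∃ y z : ℝ, max y z = x ∧ m = min (f y) (g z)} =
      ((fun z => min (f x) (g z)) '' Set.Iic x) ∪ ((fun y => min (f y) (g x)) '' Set.Iic x) := by
    ext m
    constructor
    · rintro ⟨y, z, hmax, rfl⟩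
      rcases le_total y z with h | h
      · have hz : z = x := by rw [max_eq_right h] at hmax; exact hmax
        exact Or.inr ⟨y, hz ▸ h, by rw [hz]⟩
      · have hy : y = x := by rw [max_eq_left h] at hmax; exact hmax
        exact Or.inl ⟨z, hy ▸ h, by rw [hy]⟩
    · rintro (⟨z, hz, rfl⟩ | ⟨y, hy, rfl⟩)
      · exact ⟨x, z, max_eq_left hz, rfl⟩
      · exact ⟨y, x, max_eq_right hy, rfl⟩
  have h1 : ((fun z => min (f x) (g z)) '' Set.Iic x) = (fun t => min (f x) t) '' (g '' Set.Iic x) := by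
    rw [Set.image_image]
  have h2 : ((fun y => min (f y) (g x)) '' Set.Iic x) = (fun t => min t (g x)) '' (f '' Set.Iic x) := by
    rw [Set.image_image]
  have hb1 : BddAbove ((fun z => min (f x) (g z)) '' Set.Iic x) :=
    ⟨f x, by rintro _ ⟨z, _, rfl⟩; exact min_le_left _ _⟩
  have hn1 : ((fun z => min (f x) (g z)) '' Set.Iic x).Nonempty :=
    ⟨_, ⟨x, self_mem_Iic, rfl⟩⟩
  have hb2 : BddAbove ((fun y => min (f y) (g x)) '' Set.Iic x) :=
    ⟨g x, by rintro _ ⟨y, _, rfl⟩; exact min_le_right _ _⟩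
  have hn2 : ((fun y => min (f y) (g x)) '' Set.Iic x).Nonempty :=
    ⟨_, ⟨x, self_mem_Iic, rfl⟩⟩
  show sSup _ = _
  rw [hS, csSup_union hb1 hn1 hb2 hn2, h1, h2,
    csSup_min_image _ _ (nonempty_Iic.image g) (bddL hg1),
    csSup_min_image' _ _ (nonempty_Iic.image f) (bddL hf1)]
  rfl

end Aux
section Cuts

variable {f g : ℝ → ℝ} {c d x α : ℝ}

lemma le_Rsup_iff (hf : Nice f c) (hα : α ∈ Set.Ioc (0:ℝ) 1) {a b : ℝ}
    (hcut : {x | α ≤ f x} = Set.Icc a b) : α ≤ Rsup f x ↔ x ≤ b := by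
  have hcm : c ∈ Set.Icc a b := by
    rw [← hcut]; show α ≤ f c; rw [hf.core]; exact hα.2
  constructor
  · intro h
    rcases le_total x c with hx | hx
    · exact hx.trans hcm.2
    · rw [Rsup_eq_self hf hx] at h
      have hm : x ∈ Set.Icc a b := by rw [← hcut]; exact h
      exact hm.2
  · intro h
    rcases le_total x c with hx | hx
    · rw [Rsup_eq_one hf hx]; exact hα.2
    · rw [Rsup_eq_self hf hx]
      have hm : x ∈ Set.Icc a b := ⟨hcm.1.trans hx, h⟩
      rw [← hcut] at hm; exact hm

lemma le_Lsup_iff (hf : Nice f c) (hα : α ∈ Set.Ioc (0:ℝ) 1) {a b : ℝ}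
    (hcut : {x | α ≤ f x} = Set.Icc a b) : α ≤ Lsup f x ↔ a ≤ x := by
  have hcm : c ∈ Set.Icc a b := by
    rw [← hcut]; show α ≤ f c; rw [hf.core]; exact hα.2
  constructor
  · intro h
    rcases le_total c x with hx | hx
    · exact hcm.1.trans hx
    · rw [Lsup_eq_self hf hx] at h
      have hm : x ∈ Set.Icc a b := by rw [← hcut]; exact h
      exact hm.1
  · intro h
    rcases le_total c x with hx | hx
    · rw [Lsup_eq_one hf hx]; exact hα.2
    · rw [Lsup_eq_self hf hx]
      have hm : x ∈ Set.Icc a b := ⟨h, hx.trans hcm.2⟩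
      rw [← hcut] at hm; exact hm

lemma cut_fmin (hf : IsFuzzyNumber f) (hg : IsFuzzyNumber g) {α af bf ag bg : ℝ}
    (hα : α ∈ Set.Ioc (0:ℝ) 1)
    (hcf : {x | α ≤ f x} = Set.Icc af bf) (hcg : {x | α ≤ g x} = Set.Icc ag bg) :
    {x | α ≤ fmin f g x} = Set.Icc (min af ag) (min bf bg) := by
  obtain ⟨c, hf'⟩ := nice_of_fuzzy hf
  obtain ⟨d, hg'⟩ := nice_of_fuzzy hg
  have hf1 : ∀ x, f x ≤ 1 := fun x => (hf'.mem x).2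
  have hg1 : ∀ x, g x ≤ 1 := fun x => (hg'.mem x).2
  ext x
  have hfx : α ≤ f x ↔ af ≤ x ∧ x ≤ bf := by
    have h := Set.ext_iff.mp hcf x; simpa using h
  have hgx : α ≤ g x ↔ ag ≤ x ∧ x ≤ bg := by
    have h := Set.ext_iff.mp hcg x; simpa using h
  simp only [Set.mem_setOf_eq, fmin_eq hf1 hg1 x, le_max_iff, le_min_iff, Set.mem_Icc,
    le_Rsup_iff hf' hα hcf, le_Rsup_iff hg' hα hcg, hfx, hgx]
  constructor
  · rintro (⟨⟨h1, h2⟩, h3⟩ | ⟨h1, h2, h3⟩)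
    · exact ⟨le_trans (min_le_left _ _) h1, h2, h3⟩
    · exact ⟨le_trans (min_le_right _ _) h2, h1, h3⟩
  · rintro ⟨h1, h2, h3⟩
    rcases le_total af ag with h | h
    · exact Or.inl ⟨⟨by rwa [min_eq_left h] at h1, h2⟩, h3⟩
    · exact Or.inr ⟨h2, by rwa [min_eq_right h] at h1, h3⟩

lemma cut_fmax (hf : IsFuzzyNumber f) (hg : IsFuzzyNumber g) {α af bf ag bg : ℝ}
    (hα : α ∈ Set.Ioc (0:ℝ) 1)
    (hcf : {x | α ≤ f x} = Set.Icc af bf) (hcg : {x | α ≤ g x} = Set.Icc ag bg) :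
    {x | α ≤ fmax f g x} = Set.Icc (max af ag) (max bf bg) := by
  obtain ⟨c, hf'⟩ := nice_of_fuzzy hf
  obtain ⟨d, hg'⟩ := nice_of_fuzzy hg
  have hf1 : ∀ x, f x ≤ 1 := fun x => (hf'.mem x).2
  have hg1 : ∀ x, g x ≤ 1 := fun x => (hg'.mem x).2
  ext x
  have hfx : α ≤ f x ↔ af ≤ x ∧ x ≤ bf := by
    have h := Set.ext_iff.mp hcf x; simpa using h
  have hgx : α ≤ g x ↔ ag ≤ x ∧ x ≤ bg := by
    have h := Set.ext_iff.mp hcg x; simpa using h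
  simp only [Set.mem_setOf_eq, fmax_eq hf1 hg1 x, le_max_iff, le_min_iff, Set.mem_Icc,
    le_Lsup_iff hf' hα hcf, le_Lsup_iff hg' hα hcg, hfx, hgx]
  constructor
  · rintro (⟨⟨h1, h2⟩, h3⟩ | ⟨h1, h2, h3⟩)
    · exact ⟨max_le h1 h3, Or.inl h2⟩
    · exact ⟨max_le h1 h2, Or.inr h3⟩
  · rintro ⟨h1, h2 | h2⟩
    · exact Or.inl ⟨⟨(max_le_iff.mp h1).1, h2⟩, (max_le_iff.mp h1).2⟩
    · exact Or.inr ⟨(max_le_iff.mp h1).1, (max_le_iff.mp h1).2, h2⟩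

lemma fmin_mem_Icc (hf : IsFuzzyNumber f) (hg : IsFuzzyNumber g) (x : ℝ) :
    fmin f g x ∈ Set.Icc (0:ℝ) 1 := by
  obtain ⟨c, hf'⟩ := nice_of_fuzzy hf
  obtain ⟨d, hg'⟩ := nice_of_fuzzy hg
  have hf1 : ∀ x, f x ≤ 1 := fun x => (hf'.mem x).2
  have hg1 : ∀ x, g x ≤ 1 := fun x => (hg'.mem x).2
  rw [fmin_eq hf1 hg1 x]
  constructor
  · exact le_trans (le_min (hf'.mem x).1 (Rsup_nonneg hg')) (le_max_left _ _)
  · exact max_le ((min_le_left _ _).trans (hf1 x)) ((min_le_right _ _).trans (hg1 x))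

lemma fmax_mem_Icc (hf : IsFuzzyNumber f) (hg : IsFuzzyNumber g) (x : ℝ) :
    fmax f g x ∈ Set.Icc (0:ℝ) 1 := by
  obtain ⟨c, hf'⟩ := nice_of_fuzzy hf
  obtain ⟨d, hg'⟩ := nice_of_fuzzy hg
  have hf1 : ∀ x, f x ≤ 1 := fun x => (hf'.mem x).2
  have hg1 : ∀ x, g x ≤ 1 := fun x => (hg'.mem x).2
  rw [fmax_eq hf1 hg1 x]
  constructor
  · exact le_trans (le_min (hf'.mem x).1 (Lsup_nonneg hg')) (le_max_left _ _)
  · exact max_le ((min_le_left _ _).trans (hf1 x)) ((min_le_right _ _).trans (hg1 x))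

lemma fmin_isFuzzy (hf : IsFuzzyNumber f) (hg : IsFuzzyNumber g) :
    IsFuzzyNumber (fmin f g) := by
  obtain ⟨c, hf'⟩ := nice_of_fuzzy hf
  obtain ⟨d, hg'⟩ := nice_of_fuzzy hg
  have hf1 : ∀ x, f x ≤ 1 := fun x => (hf'.mem x).2
  have hg1 : ∀ x, g x ≤ 1 := fun x => (hg'.mem x).2
  have hmem := fmin_mem_Icc hf hg
  refine ⟨hmem, ?_, ?_, ?_⟩
  · -- normality
    have h1 : fmin f g (min c d) = 1 := by
      refine le_antisymm (hmem _).2 ?_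
      rw [fmin_eq hf1 hg1]
      rcases le_total c d with h | h
      · rw [min_eq_left h]
        refine le_trans ?_ (le_max_left _ _)
        rw [hf'.core, Rsup_eq_one hg' h]
        simp
      · rw [min_eq_right h]
        refine le_trans ?_ (le_max_right _ _)
        rw [hg'.core, Rsup_eq_one hf' h]
        simp
    have hb : ∀ m ∈ Set.range (fmin f g), m ≤ 1 := by
      rintro _ ⟨y, rfl⟩; exact (hmem y).2
    exact le_antisymm (csSup_le ⟨1, ⟨min c d, h1⟩⟩ hb) (le_csSup ⟨1, hb⟩ ⟨min c d, h1⟩)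
  · intro α hα
    obtain ⟨af, bf, habf, hcf⟩ := hf.2.2.1 α hα
    obtain ⟨ag, bg, habg, hcg⟩ := hg.2.2.1 α hα
    exact ⟨min af ag, min bf bg,
      le_min ((min_le_left _ _).trans habf) ((min_le_right _ _).trans habg),
      cut_fmin hf hg hα hcf hcg⟩
  · refine (hf.2.2.2.union hg.2.2.2).subset ?_
    intro x hx
    rw [Set.mem_setOf_eq, fmin_eq hf1 hg1 x, lt_max_iff] at hx
    rcases hx with h | h
    · exact Or.inl (lt_of_lt_of_le h (min_le_left _ _))
    · exact Or.inr (lt_of_lt_of_le h (min_le_right _ _))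

lemma fmax_isFuzzy (hf : IsFuzzyNumber f) (hg : IsFuzzyNumber g) :
    IsFuzzyNumber (fmax f g) := by
  obtain ⟨c, hf'⟩ := nice_of_fuzzy hf
  obtain ⟨d, hg'⟩ := nice_of_fuzzy hg
  have hf1 : ∀ x, f x ≤ 1 := fun x => (hf'.mem x).2
  have hg1 : ∀ x, g x ≤ 1 := fun x => (hg'.mem x).2
  have hmem := fmax_mem_Icc hf hg
  refine ⟨hmem, ?_, ?_, ?_⟩
  · have h1 : fmax f g (max c d) = 1 := by
      refine le_antisymm (hmem _).2 ?_
      rw [fmax_eq hf1 hg1]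
      rcases le_total c d with h | h
      · rw [max_eq_right h]
        refine le_trans ?_ (le_max_right _ _)
        rw [hg'.core, Lsup_eq_one hf' h]
        simp
      · rw [max_eq_left h]
        refine le_trans ?_ (le_max_left _ _)
        rw [hf'.core, Lsup_eq_one hg' h]
        simp
    have hb : ∀ m ∈ Set.range (fmax f g), m ≤ 1 := by
      rintro _ ⟨y, rfl⟩; exact (hmem y).2
    exact le_antisymm (csSup_le ⟨1, ⟨max c d, h1⟩⟩ hb) (le_csSup ⟨1, hb⟩ ⟨max c d, h1⟩)
  · intro α hα
    obtain ⟨af, bf, habf, hcf⟩ := hf.2.2.1 α hα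
    obtain ⟨ag, bg, habg, hcg⟩ := hg.2.2.1 α hα
    exact ⟨max af ag, max bf bg,
      max_le (habf.trans (le_max_left _ _)) (habg.trans (le_max_right _ _)),
      cut_fmax hf hg hα hcf hcg⟩
  · refine (hf.2.2.2.union hg.2.2.2).subset ?_
    intro x hx
    rw [Set.mem_setOf_eq, fmax_eq hf1 hg1 x, lt_max_iff] at hx
    rcases hx with h | h
    · exact Or.inl (lt_of_lt_of_le h (min_le_left _ _))
    · exact Or.inr (lt_of_lt_of_le h (min_le_right _ _))

/-- Two fuzzy numbers with the same α-cuts are equal. -/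
lemma eq_of_cuts (hf : IsFuzzyNumber f) (hg : IsFuzzyNumber g)
    (h : ∀ α ∈ Set.Ioc (0:ℝ) 1, {x | α ≤ f x} = {x | α ≤ g x}) : f = g := by
  have key : ∀ (p q : ℝ → ℝ), (∀ y, p y ∈ Set.Icc (0:ℝ) 1) → (∀ y, q y ∈ Set.Icc (0:ℝ) 1) →
      (∀ α ∈ Set.Ioc (0:ℝ) 1, {x | α ≤ p x} = {x | α ≤ q x}) → ∀ x, p x ≤ q x := by
    intro p q hp hq hpq x
    by_contra hc
    push_neg at hc
    have hα : p x ∈ Set.Ioc (0:ℝ) 1 := ⟨lt_of_le_of_lt (hq x).1 hc, (hp x).2⟩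
    have hm : x ∈ {y | p x ≤ p y} := le_refl (p x)
    rw [hpq _ hα] at hm
    exact absurd hm (not_le.mpr hc)
  funext x
  exact le_antisymm (key f g hf.1 hg.1 h x) (key g f hg.1 hf.1 (fun α hα => (h α hα).symm) x)

end Cuts
section Laws

variable {f g h : ℝ → ℝ}

lemma fmin_comm' (hf : IsFuzzyNumber f) (hg : IsFuzzyNumber g) : fmin f g = fmin g f := by
  apply eq_of_cuts (fmin_isFuzzy hf hg) (fmin_isFuzzy hg hf)
  intro α hα
  obtain ⟨af, bf, _, hcf⟩ := hf.2.2.1 α hα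
  obtain ⟨ag, bg, _, hcg⟩ := hg.2.2.1 α hα
  rw [cut_fmin hf hg hα hcf hcg, cut_fmin hg hf hα hcg hcf, min_comm af, min_comm bf]

lemma fmax_comm' (hf : IsFuzzyNumber f) (hg : IsFuzzyNumber g) : fmax f g = fmax g f := by
  apply eq_of_cuts (fmax_isFuzzy hf hg) (fmax_isFuzzy hg hf)
  intro α hα
  obtain ⟨af, bf, _, hcf⟩ := hf.2.2.1 α hα
  obtain ⟨ag, bg, _, hcg⟩ := hg.2.2.1 α hα
  rw [cut_fmax hf hg hα hcf hcg, cut_fmax hg hf hα hcg hcf, max_comm af, max_comm bf]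

lemma fmin_assoc' (hf : IsFuzzyNumber f) (hg : IsFuzzyNumber g) (hh : IsFuzzyNumber h) :
    fmin (fmin f g) h = fmin f (fmin g h) := by
  apply eq_of_cuts (fmin_isFuzzy (fmin_isFuzzy hf hg) hh) (fmin_isFuzzy hf (fmin_isFuzzy hg hh))
  intro α hα
  obtain ⟨af, bf, _, hcf⟩ := hf.2.2.1 α hα
  obtain ⟨ag, bg, _, hcg⟩ := hg.2.2.1 α hα
  obtain ⟨ah, bh, _, hch⟩ := hh.2.2.1 α hα
  rw [cut_fmin (fmin_isFuzzy hf hg) hh hα (cut_fmin hf hg hα hcf hcg) hch,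
    cut_fmin hf (fmin_isFuzzy hg hh) hα hcf (cut_fmin hg hh hα hcg hch),
    min_assoc, min_assoc]

lemma fmax_assoc' (hf : IsFuzzyNumber f) (hg : IsFuzzyNumber g) (hh : IsFuzzyNumber h) :
    fmax (fmax f g) h = fmax f (fmax g h) := by
  apply eq_of_cuts (fmax_isFuzzy (fmax_isFuzzy hf hg) hh) (fmax_isFuzzy hf (fmax_isFuzzy hg hh))
  intro α hα
  obtain ⟨af, bf, _, hcf⟩ := hf.2.2.1 α hα
  obtain ⟨ag, bg, _, hcg⟩ := hg.2.2.1 α hα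
  obtain ⟨ah, bh, _, hch⟩ := hh.2.2.1 α hα
  rw [cut_fmax (fmax_isFuzzy hf hg) hh hα (cut_fmax hf hg hα hcf hcg) hch,
    cut_fmax hf (fmax_isFuzzy hg hh) hα hcf (cut_fmax hg hh hα hcg hch),
    max_assoc, max_assoc]

lemma fmin_idem' (hf : IsFuzzyNumber f) : fmin f f = f := by
  apply eq_of_cuts (fmin_isFuzzy hf hf) hf
  intro α hα
  obtain ⟨af, bf, _, hcf⟩ := hf.2.2.1 α hα
  rw [cut_fmin hf hf hα hcf hcf, hcf, min_self, min_self]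

lemma fmax_idem' (hf : IsFuzzyNumber f) : fmax f f = f := by
  apply eq_of_cuts (fmax_isFuzzy hf hf) hf
  intro α hα
  obtain ⟨af, bf, _, hcf⟩ := hf.2.2.1 α hα
  rw [cut_fmax hf hf hα hcf hcf, hcf, max_self, max_self]

lemma fmin_absorb' (hf : IsFuzzyNumber f) (hg : IsFuzzyNumber g) : fmin f (fmax f g) = f := by
  apply eq_of_cuts (fmin_isFuzzy hf (fmax_isFuzzy hf hg)) hf
  intro α hα
  obtain ⟨af, bf, _, hcf⟩ := hf.2.2.1 α hα
  obtain ⟨ag, bg, _, hcg⟩ := hg.2.2.1 α hα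
  rw [cut_fmin hf (fmax_isFuzzy hf hg) hα hcf (cut_fmax hf hg hα hcf hcg), hcf,
    min_eq_left (le_max_left af ag), min_eq_left (le_max_left bf bg)]

lemma fmax_absorb' (hf : IsFuzzyNumber f) (hg : IsFuzzyNumber g) : fmax f (fmin f g) = f := by
  apply eq_of_cuts (fmax_isFuzzy hf (fmin_isFuzzy hf hg)) hf
  intro α hα
  obtain ⟨af, bf, _, hcf⟩ := hf.2.2.1 α hα
  obtain ⟨ag, bg, _, hcg⟩ := hg.2.2.1 α hα
  rw [cut_fmax hf (fmin_isFuzzy hf hg) hα hcf (cut_fmin hf hg hα hcf hcg), hcf,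
    max_eq_left (min_le_left af ag), max_eq_left (min_le_left bf bg)]

lemma fmin_distrib' (hf : IsFuzzyNumber f) (hg : IsFuzzyNumber g) (hh : IsFuzzyNumber h) :
    fmin f (fmax g h) = fmax (fmin f g) (fmin f h) := by
  apply eq_of_cuts (fmin_isFuzzy hf (fmax_isFuzzy hg hh))
    (fmax_isFuzzy (fmin_isFuzzy hf hg) (fmin_isFuzzy hf hh))
  intro α hα
  obtain ⟨af, bf, _, hcf⟩ := hf.2.2.1 α hα
  obtain ⟨ag, bg, _, hcg⟩ := hg.2.2.1 α hα
  obtain ⟨ah, bh, _, hch⟩ := hh.2.2.1 α hα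
  rw [cut_fmin hf (fmax_isFuzzy hg hh) hα hcf (cut_fmax hg hh hα hcg hch),
    cut_fmax (fmin_isFuzzy hf hg) (fmin_isFuzzy hf hh) hα
      (cut_fmin hf hg hα hcf hcg) (cut_fmin hf hh hα hcf hch),
    min_max_distrib_left, min_max_distrib_left]

lemma fmax_distrib' (hf : IsFuzzyNumber f) (hg : IsFuzzyNumber g) (hh : IsFuzzyNumber h) :
    fmax f (fmin g h) = fmin (fmax f g) (fmax f h) := by
  apply eq_of_cuts (fmax_isFuzzy hf (fmin_isFuzzy hg hh))
    (fmin_isFuzzy (fmax_isFuzzy hf hg) (fmax_isFuzzy hf hh))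
  intro α hα
  obtain ⟨af, bf, _, hcf⟩ := hf.2.2.1 α hα
  obtain ⟨ag, bg, _, hcg⟩ := hg.2.2.1 α hα
  obtain ⟨ah, bh, _, hch⟩ := hh.2.2.1 α hα
  rw [cut_fmax hf (fmin_isFuzzy hg hh) hα hcf (cut_fmin hg hh hα hcg hch),
    cut_fmin (fmax_isFuzzy hf hg) (fmax_isFuzzy hf hh) hα
      (cut_fmax hf hg hα hcf hcg) (cut_fmax hf hh hα hcf hch),
    max_min_distrib_left, max_min_distrib_left]

end Laws
/-- For fuzzy numbers `A, B`, both `A ∧ B` and `A ∨ B` are fuzzy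
numbers; moreover `(F(ℝ), ∧, ∨)` is a distributive lattice: `∧` and `∨` are
commutative, associative, idempotent, satisfy the absorption laws, and each
distributes over the other. -/
theorem fuzzyNumbers_distributive_lattice :
    (∀ A B : FN, IsFuzzyNumber (fmin A.1 B.1) ∧ IsFuzzyNumber (fmax A.1 B.1)) ∧
    (∀ A B : FN, fmin A.1 B.1 = fmin B.1 A.1) ∧
    (∀ A B : FN, fmax A.1 B.1 = fmax B.1 A.1) ∧
    (∀ A B C : FN, fmin (fmin A.1 B.1) C.1 = fmin A.1 (fmin B.1 C.1)) ∧
    (∀ A B C : FN, fmax (fmax A.1 B.1) C.1 = fmax A.1 (fmax B.1 C.1)) ∧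
    (∀ A : FN, fmin A.1 A.1 = A.1) ∧
    (∀ A : FN, fmax A.1 A.1 = A.1) ∧
    (∀ A B : FN, fmin A.1 (fmax A.1 B.1) = A.1) ∧
    (∀ A B : FN, fmax A.1 (fmin A.1 B.1) = A.1) ∧
    (∀ A B C : FN, fmin A.1 (fmax B.1 C.1) = fmax (fmin A.1 B.1) (fmin A.1 C.1)) ∧
    (∀ A B C : FN, fmax A.1 (fmin B.1 C.1) = fmin (fmax A.1 B.1) (fmax A.1 C.1)) :=
  ⟨fun A B => ⟨fmin_isFuzzy A.2 B.2, fmax_isFuzzy A.2 B.2⟩,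
   fun A B => fmin_comm' A.2 B.2,
   fun A B => fmax_comm' A.2 B.2,
   fun A B C => fmin_assoc' A.2 B.2 C.2,
   fun A B C => fmax_assoc' A.2 B.2 C.2,
   fun A => fmin_idem' A.2,
   fun A => fmax_idem' A.2,
   fun A B => fmin_absorb' A.2 B.2,
   fun A B => fmax_absorb' A.2 B.2,
   fun A B C => fmin_distrib' A.2 B.2 C.2,
   fun A B C => fmax_distrib' A.2 B.2 C.2⟩
end

section
/- Let A : ℝ → [0,1] be a fuzzy set on ℝ. Then A is a fuzzy number if and only if there exist real numbers ω₁ ≤ a ≤ b ≤ ω₂, a function l : (−∞, a) → [0,1] that is right-continuous, nondecreasing on [ω₁, a), and equal to 0 on (−∞, ω₁), and a function r : (b, ∞) → [0,1] that is left-continuous, nonincreasing on (b, ω₂], and equal to 0 on (ω₂, ∞), such that A(x) = 1 for x ∈ [a,b], A(x) = l(x) for x < a, and A(x) = r(x) for x > b. -/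
open Set

/-- (Characterization of fuzzy numbers.) A fuzzy set `A : ℝ → [0,1]`
is a fuzzy number iff there are `ω₁ ≤ a ≤ b ≤ ω₂` and functions `l` (right-continuous
on `(−∞,a)`, nondecreasing on `[ω₁,a)`, zero on `(−∞,ω₁)`, with values in `[0,1]`)
and `r` (left-continuous on `(b,∞)`, nonincreasing on `(b,ω₂]`, zero on `(ω₂,∞)`,
with values in `[0,1]`) such that `A = 1` on `[a,b]`, `A = l` on `(−∞,a)` and
`A = r` on `(b,∞)`. -/
theorem fuzzyNumber_characterization
    (A : ℝ → ℝ) (hA : ∀ x, A x ∈ Set.Icc (0:ℝ) 1) :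
    IsFuzzyNumber A ↔
      ∃ ω₁ a b ω₂ : ℝ, ω₁ ≤ a ∧ a ≤ b ∧ b ≤ ω₂ ∧
        ∃ l r : ℝ → ℝ,
          (∀ x, x < a → l x ∈ Set.Icc (0:ℝ) 1) ∧
          (∀ x, x < a → ContinuousWithinAt l (Set.Ico x a) x) ∧
          MonotoneOn l (Set.Ico ω₁ a) ∧
          (∀ x, x < ω₁ → l x = 0) ∧
          (∀ x, b < x → r x ∈ Set.Icc (0:ℝ) 1) ∧
          (∀ x, b < x → ContinuousWithinAt r (Set.Ioc b x) x) ∧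
          AntitoneOn r (Set.Ioc b ω₂) ∧
          (∀ x, ω₂ < x → r x = 0) ∧
          (∀ x ∈ Set.Icc a b, A x = 1) ∧
          (∀ x, x < a → A x = l x) ∧
          (∀ x, b < x → A x = r x) := by
  constructor
  · rintro ⟨hb, _hnorm, hcuts, hsupp⟩
    obtain ⟨a, b, hab, hcut1⟩ := hcuts 1 ⟨one_pos, le_refl 1⟩
    have h1 : ∀ x ∈ Icc a b, A x = 1 := by
      intro x hx
      have hx1 : x ∈ {x | (1:ℝ) ≤ A x} := hcut1 ▸ hx
      exact le_antisymm (hA x).2 hx1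
    have hA1 : A a = 1 := h1 a ⟨le_refl a, hab⟩
    have hAb1 : A b = 1 := h1 b ⟨hab, le_refl b⟩
    -- monotonicity on (-∞, a)
    have hmono : ∀ x y : ℝ, x ≤ y → y < a → A x ≤ A y := by
      intro x y hxy hya
      by_contra h
      push_neg at h
      have hα : A x ∈ Ioc (0:ℝ) 1 := ⟨lt_of_le_of_lt (hA y).1 h, (hA x).2⟩
      obtain ⟨p, q, _hpq, hC⟩ := hcuts (A x) hα
      have hxC : x ∈ Icc p q := (Set.ext_iff.mp hC x).mp (le_refl (A x))
      have haC : a ∈ Icc p q := (Set.ext_iff.mp hC a).mp (by simp only [mem_setOf_eq, hA1]; exact hα.2)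
      have hyC : y ∈ Icc p q := ⟨le_trans hxC.1 hxy, le_trans hya.le haC.2⟩
      have : A x ≤ A y := (Set.ext_iff.mp hC y).mpr hyC
      exact absurd this (not_le.mpr h)
    have hanti : ∀ x y : ℝ, b < x → x ≤ y → A y ≤ A x := by
      intro x y hbx hxy
      by_contra h
      push_neg at h
      have hα : A y ∈ Ioc (0:ℝ) 1 := ⟨lt_of_le_of_lt (hA x).1 h, (hA y).2⟩
      obtain ⟨p, q, _hpq, hC⟩ := hcuts (A y) hα
      have hyC : y ∈ Icc p q := (Set.ext_iff.mp hC y).mp (le_refl (A y))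
      have hbC : b ∈ Icc p q := (Set.ext_iff.mp hC b).mp (by simp only [mem_setOf_eq, hAb1]; exact hα.2)
      have hxC : x ∈ Icc p q := ⟨le_trans hbC.1 hbx.le, le_trans hxy hyC.2⟩
      have : A y ≤ A x := (Set.ext_iff.mp hC x).mpr hxC
      exact absurd this (not_le.mpr h)
    -- bounds on the support
    have hbd := Bornology.IsBounded.bddBelow hsupp
    have hbu := Bornology.IsBounded.bddAbove hsupp
    obtain ⟨c, hc⟩ := hbd
    obtain ⟨d, hd⟩ := hbu
    have hzero_lt : ∀ x, x < c → A x = 0 := by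
      intro x hx
      by_contra h
      have : (0:ℝ) < A x := lt_of_le_of_ne (hA x).1 (Ne.symm h)
      exact absurd (hc this) (not_le.mpr hx)
    have hzero_gt : ∀ x, d < x → A x = 0 := by
      intro x hx
      by_contra h
      have : (0:ℝ) < A x := lt_of_le_of_ne (hA x).1 (Ne.symm h)
      exact absurd (hd this) (not_le.mpr hx)
    refine ⟨min c a, a, b, max d b, min_le_right _ _, hab, le_max_right _ _, A, A,
      fun x _ => hA x, ?_, ?_, ?_, fun x _ => hA x, ?_, ?_, ?_, h1,
      fun x _ => rfl, fun x _ => rfl⟩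
    · -- right-continuity of A on (-∞, a)
      intro x hxa
      rw [Metric.continuousWithinAt_iff]
      intro ε hε
      by_cases hcase : A x + ε ≤ 1
      · have hαpos : (0:ℝ) < A x + ε := lt_of_le_of_lt (hA x).1 (lt_add_of_pos_right _ hε)
        obtain ⟨p, q, _hpq, hC⟩ := hcuts (A x + ε) ⟨hαpos, hcase⟩
        have haC : a ∈ Icc p q := (Set.ext_iff.mp hC a).mp (by simp only [mem_setOf_eq, hA1]; exact hcase)
        have hxnC : x ∉ Icc p q := by
          intro hxm
          have : A x + ε ≤ A x := (Set.ext_iff.mp hC x).mpr hxm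
          linarith
        have hxp : x < p := by
          by_contra h
          push_neg at h
          exact hxnC ⟨h, le_trans hxa.le haC.2⟩
        refine ⟨p - x, by linarith, ?_⟩
        intro y hy hdy
        have hyp : y < p := by
          rw [Real.dist_eq] at hdy
          have := abs_lt.mp hdy
          linarith [this.1]
        have hynC : y ∉ Icc p q := fun hm => absurd hm.1 (not_le.mpr hyp)
        have hyA : A y < A x + ε := by
          by_contra h
          push_neg at h
          exact hynC ((Set.ext_iff.mp hC y).mp h)
        have hmA : A x ≤ A y := hmono x y hy.1 hy.2
        rw [Real.dist_eq, abs_of_nonneg (by linarith)]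
        linarith
      · refine ⟨1, one_pos, ?_⟩
        intro y hy _
        have h1' : A x ≤ A y := hmono x y hy.1 hy.2
        have h2' : A y ≤ 1 := (hA y).2
        rw [Real.dist_eq, abs_of_nonneg (by linarith)]
        linarith [not_le.mp hcase]
    · exact fun x hx y hy hxy => hmono x y hxy hy.2
    · intro x hx
      exact hzero_lt x (lt_of_lt_of_le hx (min_le_left _ _))
    · -- left-continuity of A on (b, ∞)
      intro x hbx
      rw [Metric.continuousWithinAt_iff]
      intro ε hε
      by_cases hcase : A x + ε ≤ 1
      · have hαpos : (0:ℝ) < A x + ε := lt_of_le_of_lt (hA x).1 (lt_add_of_pos_right _ hε)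
        obtain ⟨p, q, _hpq, hC⟩ := hcuts (A x + ε) ⟨hαpos, hcase⟩
        have hbC : b ∈ Icc p q := (Set.ext_iff.mp hC b).mp (by simp only [mem_setOf_eq, hAb1]; exact hcase)
        have hxnC : x ∉ Icc p q := by
          intro hxm
          have : A x + ε ≤ A x := (Set.ext_iff.mp hC x).mpr hxm
          linarith
        have hqx : q < x := by
          by_contra h
          push_neg at h
          exact hxnC ⟨le_trans hbC.1 hbx.le, h⟩
        refine ⟨x - q, by linarith, ?_⟩
        intro y hy hdy
        have hyq : q < y := by
          rw [Real.dist_eq] at hdy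
          have := abs_lt.mp hdy
          linarith [this.1]
        have hynC : y ∉ Icc p q := fun hm => absurd hm.2 (not_le.mpr hyq)
        have hyA : A y < A x + ε := by
          by_contra h
          push_neg at h
          exact hynC ((Set.ext_iff.mp hC y).mp h)
        have hmA : A y ≥ A x := hanti y x hy.1 hy.2 -- careful: hanti x y uses b < x, x ≤ y
        rw [Real.dist_eq, abs_of_nonneg (by linarith)]
        linarith
      · refine ⟨1, one_pos, ?_⟩
        intro y hy _
        have h1' : A x ≤ A y := hanti y x hy.1 hy.2
        have h2' : A y ≤ 1 := (hA y).2
        rw [Real.dist_eq, abs_of_nonneg (by linarith)]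
        linarith [not_le.mp hcase]
    · exact fun x hx y hy hxy => hanti x y hx.1 (by exact hxy)
    · intro x hx
      exact hzero_gt x (lt_of_le_of_lt (le_max_left _ _) hx)
  · rintro ⟨ω₁, a, b, ω₂, hω₁a, hab, hbω₂, l, r, hl01, hlc, hlm, hl0, hr01, hrc, hra, hr0,
      hAab, hAl, hAr⟩
    have hAa : A a = 1 := hAab a ⟨le_refl a, hab⟩
    have hAzlt : ∀ x, x < ω₁ → A x = 0 := fun x hx =>
      (hAl x (lt_of_lt_of_le hx hω₁a)).trans (hl0 x hx)
    have hAzgt : ∀ x, ω₂ < x → A x = 0 := fun x hx =>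
      (hAr x (lt_of_le_of_lt hbω₂ hx)).trans (hr0 x hx)
    refine ⟨hA, ?_, ?_, ?_⟩
    · apply le_antisymm
      · apply csSup_le ⟨A a, mem_range_self a⟩
        rintro y ⟨x, rfl⟩
        exact (hA x).2
      · exact le_csSup ⟨1, by rintro y ⟨x, rfl⟩; exact (hA x).2⟩ ⟨a, hAa⟩
    · intro α hα
      set C : Set ℝ := {x | α ≤ A x} with hCdef
      have haC : a ∈ C := by simp only [hCdef, mem_setOf_eq, hAa]; exact hα.2
      have hCne : C.Nonempty := ⟨a, haC⟩
      have hCsub : C ⊆ Icc ω₁ ω₂ := by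
        intro x hx
        constructor
        · by_contra h; push_neg at h
          have := hAzlt x h
          simp only [hCdef, mem_setOf_eq] at hx
          linarith [hα.1]
        · by_contra h; push_neg at h
          have := hAzgt x h
          simp only [hCdef, mem_setOf_eq] at hx
          linarith [hα.1]
      have hCbb : BddBelow C := ⟨ω₁, fun x hx => (hCsub hx).1⟩
      have hCba : BddAbove C := ⟨ω₂, fun x hx => (hCsub hx).2⟩
      -- convexity
      have hconv : ∀ x y z : ℝ, x ∈ C → y ∈ C → x ≤ z → z ≤ y → z ∈ C := by
        intro x y z hx hy hxz hzy
        simp only [hCdef, mem_setOf_eq] at hx hy ⊢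
        rcases lt_or_ge z a with hza | haz
        · -- z < a
          have hxa : x < a := lt_of_le_of_lt hxz hza
          have hlx : α ≤ l x := (hAl x hxa) ▸ hx
          have hxω : ω₁ ≤ x := by
            by_contra h; push_neg at h
            rw [hl0 x h] at hlx
            linarith [hα.1]
          have : l x ≤ l z := hlm ⟨hxω, hxa⟩ ⟨le_trans hxω hxz, hza⟩ hxz
          rw [hAl z hza]
          linarith
        · rcases le_or_gt z b with hzb | hbz
          · rw [hAab z ⟨haz, hzb⟩]; exact hα.2
          · -- b < z
            have hby : b < y := lt_of_lt_of_le hbz hzy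
            have hry : α ≤ r y := (hAr y hby) ▸ hy
            have hyω : y ≤ ω₂ := by
              by_contra h; push_neg at h
              rw [hr0 y h] at hry
              linarith [hα.1]
            have : r y ≤ r z := hra ⟨hbz, le_trans hzy hyω⟩ ⟨hby, hyω⟩ hzy
            rw [hAr z hbz]
            linarith
      set p := sInf C with hp
      set q := sSup C with hq
      have hpa : p ≤ a := csInf_le hCbb haC
      have haq : a ≤ q := le_csSup hCba haC
      have hpC : p ∈ C := by
        rcases eq_or_lt_of_le hpa with h | hpa'
        · -- p = a
          rw [h]; exact haC
        · have hall : ∀ z ∈ Ioo p a, z ∈ C := by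
            intro z hz
            obtain ⟨x, hxC, hxz⟩ := (csInf_lt_iff hCbb hCne).mp (hp ▸ hz.1)
            exact hconv x a z hxC haC hxz.le hz.2.le
          have hnb : (nhdsWithin p (Ioo p a)).NeBot := by
            rw [← mem_closure_iff_nhdsWithin_neBot, closure_Ioo (ne_of_lt hpa')]
            exact ⟨le_refl p, hpa'.le⟩
          have htend : Filter.Tendsto l (nhdsWithin p (Ioo p a)) (nhds (l p)) :=
            (hlc p hpa').mono_left (nhdsWithin_mono p (fun z hz => ⟨hz.1.le, hz.2⟩))
          have hev : ∀ᶠ z in nhdsWithin p (Ioo p a), α ≤ l z := by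
            filter_upwards [eventually_mem_nhdsWithin] with z hz
            have := hall z hz
            simp only [hCdef, mem_setOf_eq] at this
            rw [← hAl z hz.2]
            exact this
          have : α ≤ l p := ge_of_tendsto htend hev
          simp only [hCdef, mem_setOf_eq]
          rw [hAl p hpa']
          exact this
      have hbC : b ∈ C := by
        simp only [hCdef, mem_setOf_eq, hAab b ⟨hab, le_refl b⟩]; exact hα.2
      have hbq : b ≤ q := le_csSup hCba hbC
      have hqC : q ∈ C := by
        rcases eq_or_lt_of_le hbq with h | hbq'
        · rw [← h]; exact hbC
        · have hall : ∀ z ∈ Ioo b q, z ∈ C := by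
            intro z hz
            obtain ⟨y, hyC, hzy⟩ := (lt_csSup_iff hCba hCne).mp (hq ▸ hz.2)
            exact hconv a y z haC hyC (le_trans hab hz.1.le) hzy.le
          have hnb : (nhdsWithin q (Ioo b q)).NeBot := by
            rw [← mem_closure_iff_nhdsWithin_neBot, closure_Ioo (ne_of_lt hbq')]
            exact ⟨hbq'.le, le_refl q⟩
          have htend : Filter.Tendsto r (nhdsWithin q (Ioo b q)) (nhds (r q)) :=
            (hrc q hbq').mono_left (nhdsWithin_mono q (fun z hz => ⟨hz.1, hz.2.le⟩))
          have hev : ∀ᶠ z in nhdsWithin q (Ioo b q), α ≤ r z := by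
            filter_upwards [eventually_mem_nhdsWithin] with z hz
            have := hall z hz
            simp only [hCdef, mem_setOf_eq] at this
            rw [← hAr z hz.1]
            exact this
          have : α ≤ r q := ge_of_tendsto htend hev
          simp only [hCdef, mem_setOf_eq]
          rw [hAr q hbq']
          exact this
      refine ⟨p, q, le_trans hpa haq, ?_⟩
      ext z
      constructor
      · intro hz
        exact ⟨csInf_le hCbb hz, le_csSup hCba hz⟩
      · intro hz
        exact hconv p q z hpC hqC hz.1 hz.2
    · apply (Metric.isBounded_Icc ω₁ ω₂).subset
      intro x hx
      simp only [mem_setOf_eq] at hx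
      constructor
      · by_contra h; push_neg at h
        rw [hAzlt x h] at hx; exact lt_irrefl 0 hx
      · by_contra h; push_neg at h
        rw [hAzgt x h] at hx; exact lt_irrefl 0 hx
end

section
/- Let a ≤ b be real numbers and let l* : [0,1] → (−∞, a] and r* : [0,1] → [b, ∞) be functions such that: (i) l* is bounded and nondecreasing; (ii) r* is bounded and nonincreasing; (iii) l*(1) ≤ r*(1); (iv) l* and r* are left-continuous at every α ∈ (0,1]; (v) l* and r* are right-continuous at 0. Then the function A : ℝ → [0,1] defined by A(x) = sup{α ∈ [0,1] : l*(α) ≤ x ≤ r*(α)} (with sup ∅ = 0) is a fuzzy number, and its α-cuts satisfy A_α = [l*(α), r*(α)] for every α ∈ (0,1]. -/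
open Set Topology Filter

/-- Given `a ≤ b` and functions `l* : [0,1] → (−∞,a]`,
`r* : [0,1] → [b,∞)` with: (i) `l*` bounded and nondecreasing; (ii) `r*` bounded and
nonincreasing; (iii) `l*(1) ≤ r*(1)`; (iv) `l*, r*` left-continuous at every
`α ∈ (0,1]`; (v) `l*, r*` right-continuous at `0`; the function
`A(x) = sup {α ∈ [0,1] : l*(α) ≤ x ≤ r*(α)}` (with `sup ∅ = 0`) is a fuzzy number
whose α-cuts are `A_α = [l*(α), r*(α)]` for every `α ∈ (0,1]`. -/
theorem fuzzyNumber_from_endpoint_functions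
    (a b : ℝ) (hab : a ≤ b) (ls rs : ℝ → ℝ)
    (hls_cod : ∀ α ∈ Set.Icc (0:ℝ) 1, ls α ≤ a)
    (hrs_cod : ∀ α ∈ Set.Icc (0:ℝ) 1, b ≤ rs α)
    (hls_bdd : ∃ M : ℝ, ∀ α ∈ Set.Icc (0:ℝ) 1, |ls α| ≤ M)
    (hls_mono : MonotoneOn ls (Set.Icc (0:ℝ) 1))
    (hrs_bdd : ∃ M : ℝ, ∀ α ∈ Set.Icc (0:ℝ) 1, |rs α| ≤ M)
    (hrs_anti : AntitoneOn rs (Set.Icc (0:ℝ) 1))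
    (h1 : ls 1 ≤ rs 1)
    (hls_lc : ∀ α ∈ Set.Ioc (0:ℝ) 1, ContinuousWithinAt ls (Set.Icc 0 α) α)
    (hrs_lc : ∀ α ∈ Set.Ioc (0:ℝ) 1, ContinuousWithinAt rs (Set.Icc 0 α) α)
    (hls_rc : ContinuousWithinAt ls (Set.Icc (0:ℝ) 1) 0)
    (hrs_rc : ContinuousWithinAt rs (Set.Icc (0:ℝ) 1) 0) :
    IsFuzzyNumber (fun x => sSup {α | α ∈ Set.Icc (0:ℝ) 1 ∧ ls α ≤ x ∧ x ≤ rs α}) ∧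
    ∀ α ∈ Set.Ioc (0:ℝ) 1,
      {x : ℝ | α ≤ sSup {β | β ∈ Set.Icc (0:ℝ) 1 ∧ ls β ≤ x ∧ x ≤ rs β}} =
        Set.Icc (ls α) (rs α) := by
  set S : ℝ → Set ℝ := fun x => {α | α ∈ Set.Icc (0:ℝ) 1 ∧ ls α ≤ x ∧ x ≤ rs α} with hS
  have hbdd : ∀ x, BddAbove (S x) := fun x => ⟨1, fun α hα => hα.1.2⟩
  have hdc : ∀ x β γ, β ∈ Set.Icc (0:ℝ) 1 → γ ∈ S x → β ≤ γ → β ∈ S x := by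
    intro x β γ hβ hγ hle
    exact ⟨hβ, (hls_mono hβ hγ.1 hle).trans hγ.2.1, hγ.2.2.trans (hrs_anti hβ hγ.1 hle)⟩
  -- the key cut characterization
  have hcut : ∀ α ∈ Set.Ioc (0:ℝ) 1, ∀ x : ℝ,
      α ≤ sSup (S x) ↔ x ∈ Set.Icc (ls α) (rs α) := by
    intro α hα x
    have hαIcc : α ∈ Set.Icc (0:ℝ) 1 := ⟨hα.1.le, hα.2⟩
    constructor
    · intro hle
      have hne : (S x).Nonempty := by
        by_contra h
        rw [Set.not_nonempty_iff_eq_empty] at h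
        rw [h, Real.sSup_empty] at hle
        exact absurd (hα.1.trans_le hle) (lt_irrefl 0)
      have hmem : ∀ β ∈ Set.Ico (0:ℝ) α, β ∈ S x := by
        intro β hβ
        obtain ⟨γ, hγS, hγ⟩ := exists_lt_of_lt_csSup hne (lt_of_lt_of_le hβ.2 hle)
        exact hdc x β γ ⟨hβ.1, hβ.2.le.trans hα.2⟩ hγS hγ.le
      have hnb : (𝓝[Set.Ico (0:ℝ) α] α).NeBot := right_nhdsWithin_Ico_neBot hα.1
      have hlsT : Filter.Tendsto ls (𝓝[Set.Ico (0:ℝ) α] α) (𝓝 (ls α)) :=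
        (hls_lc α hα).mono_left (nhdsWithin_mono _ Set.Ico_subset_Icc_self)
      have hrsT : Filter.Tendsto rs (𝓝[Set.Ico (0:ℝ) α] α) (𝓝 (rs α)) :=
        (hrs_lc α hα).mono_left (nhdsWithin_mono _ Set.Ico_subset_Icc_self)
      constructor
      · refine le_of_tendsto hlsT ?_
        filter_upwards [self_mem_nhdsWithin] with β hβ
        exact (hmem β hβ).2.1
      · refine ge_of_tendsto hrsT ?_
        filter_upwards [self_mem_nhdsWithin] with β hβ
        exact (hmem β hβ).2.2
    · intro hx
      exact le_csSup (hbdd x) ⟨hαIcc, hx.1, hx.2⟩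
  have hle1 : ∀ x, sSup (S x) ≤ 1 := fun x => Real.sSup_le (fun α hα => hα.1.2) zero_le_one
  have hge0 : ∀ x, 0 ≤ sSup (S x) := fun x => Real.sSup_nonneg (fun α hα => hα.1.1)
  refine ⟨⟨fun x => ⟨hge0 x, hle1 x⟩, ?_, ?_, ?_⟩, fun α hα => Set.ext fun x => hcut α hα x⟩
  · -- normality
    apply le_antisymm
    · exact Real.sSup_le (by rintro y ⟨x, rfl⟩; exact hle1 x) zero_le_one
    · have h1mem : (1:ℝ) ∈ S (ls 1) := ⟨⟨zero_le_one, le_refl 1⟩, le_refl _, h1⟩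
      have : (1:ℝ) ≤ sSup (S (ls 1)) := le_csSup (hbdd _) h1mem
      calc (1:ℝ) ≤ sSup (S (ls 1)) := this
        _ ≤ sSup (Set.range fun x => sSup (S x)) :=
          le_csSup ⟨1, by rintro y ⟨x, rfl⟩; exact hle1 x⟩ ⟨ls 1, rfl⟩
  · -- α-cuts are intervals
    intro α hα
    have hαIcc : α ∈ Set.Icc (0:ℝ) 1 := ⟨hα.1.le, hα.2⟩
    refine ⟨ls α, rs α, (hls_cod α hαIcc).trans (hab.trans (hrs_cod α hαIcc)), ?_⟩
    exact Set.ext fun x => hcut α hα x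
  · -- bounded support
    obtain ⟨M1, hM1⟩ := hls_bdd
    obtain ⟨M2, hM2⟩ := hrs_bdd
    apply (Metric.isBounded_Icc (-M1) M2).subset
    intro x hx
    have hx' : (0:ℝ) < sSup (S x) := hx
    have hne : (S x).Nonempty := by
      by_contra h
      rw [Set.not_nonempty_iff_eq_empty] at h
      rw [h, Real.sSup_empty] at hx'
      exact lt_irrefl 0 hx'
    obtain ⟨α, hαS⟩ := hne
    exact ⟨(neg_le_of_abs_le (hM1 α hαS.1)).trans hαS.2.1,
      hαS.2.2.trans (le_of_abs_le (hM2 α hαS.1))⟩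
end

section
/- The Xu–Yager relation ⪯_XY on closed bounded real intervals, defined by [a,b] ⪯_XY [c,d] iff a + b < c + d, or (a + b = c + d and b − a ≤ d − c), is an admissible order on the set of closed bounded real intervals: it is a linear (total) order and [a,b] ≤_KM [c,d] implies [a,b] ⪯_XY [c,d]. -/
/-- The set `𝕀ℝ` of closed bounded real intervals, encoded as endpoint pairs. -/
def IntervalR : Type := {p : ℝ × ℝ // p.1 ≤ p.2}

/-- The Kulisch–Miranker order: `[a,b] ≤_KM [c,d]` iff `a ≤ c` and `b ≤ d`. -/
def leKM (I J : IntervalR) : Prop := I.1.1 ≤ J.1.1 ∧ I.1.2 ≤ J.1.2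

/-- The Xu–Yager order: `[a,b] ⪯_XY [c,d]` iff `a + b < c + d`, or
`a + b = c + d ∧ b − a ≤ d − c`. -/
def leXY (I J : IntervalR) : Prop :=
  I.1.1 + I.1.2 < J.1.1 + J.1.2 ∨
    (I.1.1 + I.1.2 = J.1.1 + J.1.2 ∧ I.1.2 - I.1.1 ≤ J.1.2 - J.1.1)

/-! `⪯_XY` is the lexicographic order on the key `(a + b, b - a)` (twice the midpoint, then the width),
and this key determines the interval, so `⪯_XY` is the pullback of a linear order along an
injection. A `≤_KM`-step `a ≤ c`, `b ≤ d` can only keep `a + b` fixed if it is trivial. -/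

namespace IntervalR

def xyKey (I : IntervalR) : ℝ ×ₗ ℝ := toLex (I.1.1 + I.1.2, I.1.2 - I.1.1)

theorem xyKey_injective : Function.Injective xyKey := by
  rintro ⟨⟨a, b⟩, _⟩ ⟨⟨c, d⟩, _⟩ h
  obtain ⟨hsum, hwidth⟩ := Prod.ext_iff.1 (toLex.injective h)
  simp only at hsum hwidth
  have hac : a = c := by linarith
  have hbd : b = d := by linarith
  subst hac hbd
  rfl

theorem leXY_iff_xyKey_le {I J : IntervalR} : leXY I J ↔ I.xyKey ≤ J.xyKey := by
  rw [xyKey, xyKey, Prod.Lex.toLex_le_toLex]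
  rfl

theorem leXY_of_leKM {I J : IntervalR} (h : leKM I J) : leXY I J := by
  obtain ⟨ha, hb⟩ := h
  rcases (add_le_add ha hb).lt_or_eq with hsum | hsum
  · exact Or.inl hsum
  · exact Or.inr ⟨hsum, by linarith⟩

end IntervalR

/-- `⪯_XY` is an admissible order on `𝕀ℝ`: a linear (total) order
refining the Kulisch–Miranker order. -/
theorem xuYager_admissible :
    (∀ I, leXY I I) ∧
    (∀ I J, leXY I J → leXY J I → I = J) ∧
    (∀ I J K, leXY I J → leXY J K → leXY I K) ∧
    (∀ I J, leXY I J ∨ leXY J I) ∧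
    (∀ I J, leKM I J → leXY I J) := by
  simp only [IntervalR.leXY_iff_xyKey_le]
  exact ⟨fun I => le_rfl,
    fun I J hIJ hJI => IntervalR.xyKey_injective (le_antisymm hIJ hJI),
    fun I J K => le_trans,
    fun I J => le_total _ _,
    fun I J h => IntervalR.leXY_iff_xyKey_le.1 (IntervalR.leXY_of_leKM h)⟩
end

section
/- Let I = [a,b] and J = [c,d] be closed bounded real intervals and let χ_I and χ_J denote their characteristic functions (each of which is a fuzzy number). Then χ_I ∧ χ_J = χ_I if and only if I ≤_KM J; that is, the Klir–Yuan order restricted to characteristic functions of closed intervals coincides with the Kulisch–Miranker order. -/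
open Set

/-- The characteristic function of the closed interval `[a,b]`, as a fuzzy set. -/
noncomputable def chi (a b : ℝ) : ℝ → ℝ := fun x => if x ∈ Set.Icc a b then 1 else 0

lemma chi_mem (a b x : ℝ) : chi a b x = 1 ∨ chi a b x = 0 := by
  unfold chi; split <;> simp

lemma chi_eq_one_iff (a b x : ℝ) : chi a b x = 1 ↔ x ∈ Set.Icc a b := by
  unfold chi; split <;> simp_all

lemma chi_nonneg (a b x : ℝ) : 0 ≤ chi a b x := by unfold chi; split <;> norm_num

lemma chi_le_one (a b x : ℝ) : chi a b x ≤ 1 := by unfold chi; split <;> norm_num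

lemma chi_fuzzy {a b : ℝ} (hab : a ≤ b) : IsFuzzyNumber (chi a b) := by
  refine ⟨fun x => ⟨chi_nonneg a b x, chi_le_one a b x⟩, ?_, ?_, ?_⟩
  · apply le_antisymm
    · exact csSup_le (Set.range_nonempty _) (by rintro _ ⟨x, rfl⟩; exact chi_le_one a b x)
    · have h1 : chi a b a = 1 := (chi_eq_one_iff a b a).2 ⟨le_refl a, hab⟩
      calc (1:ℝ) = chi a b a := h1.symm
        _ ≤ sSup (Set.range (chi a b)) :=
            le_csSup ⟨1, by rintro _ ⟨x, rfl⟩; exact chi_le_one a b x⟩ ⟨a, rfl⟩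
  · intro α hα
    refine ⟨a, b, hab, ?_⟩
    ext x
    simp only [Set.mem_setOf_eq]
    constructor
    · intro h
      rcases chi_mem a b x with h1 | h0
      · exact (chi_eq_one_iff a b x).1 h1
      · rw [h0] at h; exact absurd h (not_le.2 hα.1)
    · intro h; rw [(chi_eq_one_iff a b x).2 h]; exact hα.2
  · have hIcc : {x | 0 < chi a b x} = Set.Icc a b := by
      ext x; simp only [Set.mem_setOf_eq]
      constructor
      · intro h
        rcases chi_mem a b x with h1 | h0
        · exact (chi_eq_one_iff a b x).1 h1
        · rw [h0] at h; exact absurd h (lt_irrefl 0)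
      · intro h; rw [(chi_eq_one_iff a b x).2 h]; norm_num
    rw [hIcc]; exact Metric.isBounded_Icc a b

lemma fmin_chi (a b c d : ℝ) (hab : a ≤ b) (hcd : c ≤ d) :
    fmin (chi a b) (chi c d) = chi (min a c) (min b d) := by
  funext x
  unfold fmin
  have hbdd : ∀ m ∈ {m | ∃ y z : ℝ, min y z = x ∧ m = min (chi a b y) (chi c d z)},
      m ≤ 1 := by
    rintro m ⟨y, z, _, rfl⟩
    exact le_trans (min_le_left _ _) (chi_le_one a b y)
  by_cases hx : x ∈ Set.Icc (min a c) (min b d)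
  · rw [(chi_eq_one_iff _ _ x).2 hx]
    apply le_antisymm
    · exact csSup_le ⟨min (chi a b x) (chi c d x), x, x, min_self x, rfl⟩ hbdd
    · apply le_csSup ⟨1, hbdd⟩
      refine ⟨max x a, max x c, ?_, ?_⟩
      · rw [← max_min_distrib_left]
        exact max_eq_left hx.1
      · have h1 : chi a b (max x a) = 1 := (chi_eq_one_iff _ _ _).2
          ⟨le_max_right _ _, max_le (hx.2.trans (min_le_left _ _)) hab⟩
        have h2 : chi c d (max x c) = 1 := (chi_eq_one_iff _ _ _).2
          ⟨le_max_right _ _, max_le (hx.2.trans (min_le_right _ _)) hcd⟩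
        rw [h1, h2]; simp
  · have hchi : chi (min a c) (min b d) x = 0 := by unfold chi; simp [hx]
    rw [hchi]
    have key : ∀ y z : ℝ, min y z = x → min (chi a b y) (chi c d z) = 0 := by
      intro y z hyz
      rcases chi_mem a b y with h1 | h1
      · rcases chi_mem c d z with h2 | h2
        · exfalso
          apply hx
          have hy := (chi_eq_one_iff a b y).1 h1
          have hz := (chi_eq_one_iff c d z).1 h2
          exact hyz ▸ ⟨min_le_min hy.1 hz.1, min_le_min hy.2 hz.2⟩
        · rw [h2]; exact min_eq_right (chi_nonneg a b y)
      · rw [h1]; exact min_eq_left (chi_nonneg c d z)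
    have hset : {m | ∃ y z : ℝ, min y z = x ∧ m = min (chi a b y) (chi c d z)} = {0} := by
      ext m
      simp only [Set.mem_setOf_eq, Set.mem_singleton_iff]
      constructor
      · rintro ⟨y, z, hyz, rfl⟩; exact key y z hyz
      · rintro rfl; exact ⟨x, x, min_self x, (key x x (min_self x)).symm⟩
    rw [hset, csSup_singleton]

/-- For closed bounded intervals `I = [a,b]` and `J = [c,d]`, their
characteristic functions are fuzzy numbers, and `χ_I ∧ χ_J = χ_I` iff `I ≤_KM J`:
the Klir–Yuan order restricted to characteristic functions of closed intervals
coincides with the Kulisch–Miranker order. -/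
theorem klirYuan_restricted_to_intervals
    (a b c d : ℝ) (hab : a ≤ b) (hcd : c ≤ d) :
    IsFuzzyNumber (chi a b) ∧ IsFuzzyNumber (chi c d) ∧
    (fmin (chi a b) (chi c d) = chi a b ↔ a ≤ c ∧ b ≤ d) := by
  refine ⟨chi_fuzzy hab, chi_fuzzy hcd, ?_⟩
  rw [fmin_chi a b c d hab hcd]
  constructor
  · intro h
    have hmm : min a c ≤ min b d := min_le_min hab hcd
    have hIcc : Set.Icc (min a c) (min b d) = Set.Icc a b := by
      ext x
      rw [← chi_eq_one_iff, ← chi_eq_one_iff, h]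
    have ha : a ≤ min a c := by
      have : min a c ∈ Set.Icc a b := hIcc ▸ (⟨le_rfl, hmm⟩ : min a c ∈ Set.Icc (min a c) (min b d))
      exact this.1
    have hb : b ≤ min b d := by
      have : b ∈ Set.Icc (min a c) (min b d) := hIcc.symm ▸ (⟨hab, le_rfl⟩ : b ∈ Set.Icc a b)
      exact this.2
    exact ⟨ha.trans (min_le_right _ _), hb.trans (min_le_right _ _)⟩
  · rintro ⟨hac, hbd⟩
    rw [min_eq_left hac, min_eq_left hbd]
end

section
/- Let A and B be fuzzy numbers. Then A and B are incomparable in the Klir–Yuan order (neither A ≤_KY B nor B ≤_KY A) if and only if: (1) there exists α ∈ (0,1] such that A_α ⋐ B_α or B_α ⋐ A_α; or (2) there exist α, β ∈ (0,1] such that A_α <_KM B_α and B_β <_KM A_β. -/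
open Set

/-- Strict inclusion of intervals via cuts: `A_α ⋐ B_α` iff `l*_B(α) < l*_A(α)` and
`r*_A(α) < r*_B(α)`. -/
def strictIncl (A B : FN) (α : ℝ) : Prop :=
  lstar B α < lstar A α ∧ rstar A α < rstar B α

/-- Strict Kulisch–Miranker comparison of cuts: `A_α <_KM B_α`. -/
def ltKMcut (A B : FN) (α : ℝ) : Prop :=
  lstar A α ≤ lstar B α ∧ rstar A α ≤ rstar B α ∧ cut A α ≠ cut B α

lemma cut_ne_iff (A B : FN) {α : ℝ} (hα : α ∈ Set.Ioc (0:ℝ) 1)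
    (h : cut A α ≠ cut B α) : lstar A α ≠ lstar B α ∨ rstar A α ≠ rstar B α := by
  by_contra hn
  push_neg at hn
  exact h (by rw [cut_eq_Icc A hα, cut_eq_Icc B hα, hn.1, hn.2])

lemma cut_ne_of_lstar (A B : FN) {α : ℝ} (hα : α ∈ Set.Ioc (0:ℝ) 1)
    (h : lstar A α ≠ lstar B α) : cut A α ≠ cut B α := by
  intro hc
  exact h (by rw [lstar, lstar, hc])

lemma cut_ne_of_rstar (A B : FN) {α : ℝ} (hα : α ∈ Set.Ioc (0:ℝ) 1)
    (h : rstar A α ≠ rstar B α) : cut A α ≠ cut B α := by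
  intro hc
  exact h (by rw [rstar, rstar, hc])

/-- Fuzzy numbers `A, B` are incomparable in the Klir–Yuan order iff
(1) there is `α ∈ (0,1]` with `A_α ⋐ B_α` or `B_α ⋐ A_α`; or (2) there are
`α, β ∈ (0,1]` with `A_α <_KM B_α` and `B_β <_KM A_β`. -/
theorem klirYuan_incomparable_iff (A B : FN) :
    (¬ leKY A B ∧ ¬ leKY B A) ↔
      ((∃ α ∈ Set.Ioc (0:ℝ) 1, strictIncl A B α ∨ strictIncl B A α) ∨
       (∃ α ∈ Set.Ioc (0:ℝ) 1, ∃ β ∈ Set.Ioc (0:ℝ) 1,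
          ltKMcut A B α ∧ ltKMcut B A β)) := by
  constructor
  · rintro ⟨hAB, hBA⟩
    simp only [leKY, not_forall] at hAB hBA
    obtain ⟨α, hα, hA⟩ := hAB
    obtain ⟨β, hβ, hB⟩ := hBA
    push_neg at hA hB
    -- from hA: at α, lstar B < lstar A or rstar B < rstar A
    have h1 : strictIncl A B α ∨ strictIncl B A α ∨ ltKMcut B A α := by
      rcases lt_or_ge (lstar B α) (lstar A α) with hl | hl
      · rcases lt_or_ge (rstar A α) (rstar B α) with hr | hr
        · exact Or.inl ⟨hl, hr⟩
        · exact Or.inr (Or.inr ⟨hl.le, hr,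
            cut_ne_of_lstar B A hα (ne_of_lt hl)⟩)
      · have hr : rstar B α < rstar A α := by
          rcases lt_or_ge (rstar B α) (rstar A α) with h | h
          · exact h
          · exact absurd (hA hl) (by simpa using h)
        rcases lt_or_ge (lstar A α) (lstar B α) with hl2 | hl2
        · exact Or.inr (Or.inl ⟨hl2, hr⟩)
        · exact Or.inr (Or.inr ⟨hl2, hr.le,
            cut_ne_of_rstar B A hα (ne_of_lt hr)⟩)
    have h2 : strictIncl A B β ∨ strictIncl B A β ∨ ltKMcut A B β := by
      rcases lt_or_ge (lstar A β) (lstar B β) with hl | hl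
      · rcases lt_or_ge (rstar B β) (rstar A β) with hr | hr
        · exact Or.inr (Or.inl ⟨hl, hr⟩)
        · exact Or.inr (Or.inr ⟨hl.le, hr,
            cut_ne_of_lstar A B hβ (ne_of_lt hl)⟩)
      · have hr : rstar A β < rstar B β := by
          rcases lt_or_ge (rstar A β) (rstar B β) with h | h
          · exact h
          · exact absurd (hB hl) (by simpa using h)
        rcases lt_or_ge (lstar B β) (lstar A β) with hl2 | hl2
        · exact Or.inl ⟨hl2, hr⟩
        · exact Or.inr (Or.inr ⟨hl2, hr.le,
            cut_ne_of_rstar A B hβ (ne_of_lt hr)⟩)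
    rcases h1 with h1 | h1 | h1
    · exact Or.inl ⟨α, hα, Or.inl h1⟩
    · exact Or.inl ⟨α, hα, Or.inr h1⟩
    rcases h2 with h2 | h2 | h2
    · exact Or.inl ⟨β, hβ, Or.inl h2⟩
    · exact Or.inl ⟨β, hβ, Or.inr h2⟩
    exact Or.inr ⟨β, hβ, α, hα, h2, h1⟩
  · rintro (⟨α, hα, h | h⟩ | ⟨α, hα, β, hβ, hAB, hBA⟩)
    · exact ⟨fun hle => absurd (hle α hα).1 (not_le.mpr h.1),
        fun hle => absurd (hle α hα).2 (not_le.mpr h.2)⟩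
    · exact ⟨fun hle => absurd (hle α hα).2 (not_le.mpr h.2),
        fun hle => absurd (hle α hα).1 (not_le.mpr h.1)⟩
    · constructor
      · intro hle
        rcases cut_ne_iff B A hβ hBA.2.2 with h | h
        · exact h (le_antisymm hBA.1 (hle β hβ).1)
        · exact h (le_antisymm hBA.2.1 (hle β hβ).2)
      · intro hle
        rcases cut_ne_iff A B hα hAB.2.2 with h | h
        · exact h (le_antisymm hAB.1 (hle α hα).1)
        · exact h (le_antisymm hAB.2.1 (hle α hα).2)
end
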